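/- arXiv:2010.12372 — 7 statements merged into one kernel-verified Lean document; each statement's English description precedes it below -/
import Mathlib

section
/- Let M₁, ..., M_k be symmetric positive semidefinite d×d real matrices with d ≥ k, and let M = M₁ + ... + M_k. Then the sum of the largest eigenvalues of the individual matrices is bounded by the sum of the k largest eigenvalues of M: ∑_{i=1}^k λ₁(M_i) ≤ ∑_{i=1}^k λ_i(M). -/
/-!
Let `u_i` be a unit top eigenvector of `M_i` and `W` the span of the `u_i`, of dimension at most
`k`. The trace of the compression of a positive operator to `W` can be computed in any orthonormal
basis of `W`, in particular in one through `u_i`; hence `λ₁(M_i) = ⟪M_i u_i, u_i⟫ ≤ tr_W M_i`, and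
summing gives `∑ λ₁(M_i) ≤ tr_W M`. Expanding in an eigenbasis of `M`, `tr_W M = ∑_j λ_j(M) t_j`
with weights `0 ≤ t_j ≤ 1` (Bessel) summing to `dim W ≤ k`; as the `λ_j(M)` are nonnegative and
decreasing, such a sum is at most `∑_{j<k} λ_j(M)` (Ky Fan).
-/

/-- The `j`-th largest eigenvalue (counted with multiplicity, `j = 0` being the largest)
of a Hermitian real matrix. -/
noncomputable def kthEig {d : ℕ} (A : Matrix (Fin d) (Fin d) ℝ) (hA : A.IsHermitian)
    (j : ℕ) : ℝ :=
  ((List.ofFn hA.eigenvalues).mergeSort (fun a b => decide (b ≤ a))).getD j 0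

open Finset Module
open scoped RealInnerProductSpace

-- `hA.eigenvalues` is `eigenvalues₀` reindexed along an arbitrary `Fin _ ≃ Fin d`, so only
-- `eigenvalues₀` is sorted.
theorem Matrix.IsHermitian.mergeSort_ofFn_eigenvalues {d : ℕ} {A : Matrix (Fin d) (Fin d) ℝ}
    (hA : A.IsHermitian) :
    (List.ofFn hA.eigenvalues).mergeSort (fun a b => decide (b ≤ a)) =
      List.ofFn hA.eigenvalues₀ := by
  refine List.Perm.eq_of_sortedGE List.sortedGE_mergeSort hA.eigenvalues₀_antitone.sortedGE_ofFn
    ((List.mergeSort_perm _ _).trans ?_)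
  rw [← Multiset.coe_eq_coe, ← Fin.univ_val_map, ← Fin.univ_val_map,
    ← Multiset.map_univ_val_equiv
      (Fintype.equivOfCardEq (Fintype.card_fin (Fintype.card (Fin d)))).symm,
    Multiset.map_map]
  rfl

theorem kthEig_eq_eigenvalues₀ {d : ℕ} {A : Matrix (Fin d) (Fin d) ℝ} (hA : A.IsHermitian)
    {j : ℕ} (hj : j < Fintype.card (Fin d)) : kthEig A hA j = hA.eigenvalues₀ ⟨j, hj⟩ := by
  simp [kthEig, hA.mergeSort_ofFn_eigenvalues, show j < d by simpa using hj]

theorem Fin.sum_castLE_eq_sum_ite {M : Type*} [AddCommMonoid M] {n k : ℕ} (hk : k ≤ n)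
    (f : Fin n → M) :
    ∑ i : Fin k, f (Fin.castLE hk i) = ∑ j : Fin n, if (j : ℕ) < k then f j else 0 := by
  rw [← Finset.sum_filter]
  refine (Finset.sum_map univ (Fin.castLEEmb hk) f).symm.trans ?_
  congr 1
  ext j
  simp only [mem_map, mem_univ, true_and, mem_filter, Fin.castLEEmb_apply, Fin.ext_iff,
    Fin.val_castLE]
  exact ⟨fun ⟨i, hi⟩ => hi ▸ i.2, fun hj => ⟨⟨j, hj⟩, rfl⟩⟩

theorem sum_mul_le_sum_castLE_of_antitone {n k : ℕ} (hk : k ≤ n) {μ t : Fin n → ℝ}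
    (hμ : Antitone μ) (hμ0 : ∀ j, 0 ≤ μ j) (ht0 : ∀ j, 0 ≤ t j) (ht1 : ∀ j, t j ≤ 1)
    (ht : ∑ j, t j ≤ k) : ∑ j, μ j * t j ≤ ∑ i : Fin k, μ (Fin.castLE hk i) := by
  obtain ⟨c, hc0, hc_lt, hc_ge⟩ : ∃ c, 0 ≤ c ∧ (∀ j : Fin n, (j : ℕ) < k → c ≤ μ j) ∧
      ∀ j : Fin n, k ≤ (j : ℕ) → μ j ≤ c := by
    rcases hk.lt_or_eq with hlt | rfl
    · exact ⟨μ ⟨k, hlt⟩, hμ0 _, fun j hj => hμ (Fin.le_def.2 hj.le),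
        fun j hj => hμ (Fin.le_def.2 hj)⟩
    · exact ⟨0, le_rfl, fun j _ => hμ0 j, fun j hj => absurd j.2 hj.not_gt⟩
  have hpoint : ∀ j, μ j * t j ≤
      (if (j : ℕ) < k then μ j else 0) + c * (t j - if (j : ℕ) < k then 1 else 0) := by
    intro j
    split_ifs with hj
    · nlinarith [hc_lt j hj, ht1 j]
    · nlinarith [hc_ge j (not_lt.1 hj), ht0 j]
  have hcard : ∑ j : Fin n, (if (j : ℕ) < k then (1 : ℝ) else 0) = k := by
    simp [← Fin.sum_castLE_eq_sum_ite hk]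
  calc ∑ j, μ j * t j ≤ ∑ j : Fin n, ((if (j : ℕ) < k then μ j else 0) +
        c * (t j - if (j : ℕ) < k then 1 else 0)) := sum_le_sum fun j _ => hpoint j
    _ = ∑ i : Fin k, μ (Fin.castLE hk i) + c * (∑ j, t j - k) := by
      rw [sum_add_distrib, ← mul_sum, sum_sub_distrib, hcard, Fin.sum_castLE_eq_sum_ite]
    _ ≤ ∑ i : Fin k, μ (Fin.castLE hk i) := by nlinarith

namespace LinearMap

variable {E : Type*} [NormedAddCommGroup E] [InnerProductSpace ℝ E]

theorem IsSymmetric.inner_apply_self_eq_sum [FiniteDimensional ℝ E] {T : E →ₗ[ℝ] E}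
    (hT : T.IsSymmetric) {n : ℕ} (hn : finrank ℝ E = n) (x : E) :
    ⟪T x, x⟫ = ∑ j, hT.eigenvalues hn j * ⟪hT.eigenvectorBasis hn j, x⟫ ^ 2 := by
  rw [← (hT.eigenvectorBasis hn).sum_inner_mul_inner (T x) x]
  refine sum_congr rfl fun j _ => ?_
  rw [hT, hT.apply_eigenvectorBasis, real_inner_comm x]
  simp [real_inner_smul_right, sq, mul_assoc]

theorem IsPositive.sum_inner_le_sum_eigenvalues [FiniteDimensional ℝ E] {T : E →ₗ[ℝ] E}
    (hT : T.IsPositive) {n k : ℕ} (hn : finrank ℝ E = n) (hk : k ≤ n) {ι : Type*} [Fintype ι]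
    (hι : Fintype.card ι ≤ k) {p : ι → E} (hp : Orthonormal ℝ p) :
    ∑ l, ⟪T (p l), p l⟫ ≤ ∑ i : Fin k, hT.isSymmetric.eigenvalues hn (Fin.castLE hk i) := by
  set e := hT.isSymmetric.eigenvectorBasis hn
  set t : Fin n → ℝ := fun j => ∑ l, ⟪e j, p l⟫ ^ 2
  have ht1 : ∀ j, t j ≤ 1 := fun j => by
    simpa [t, real_inner_comm] using hp.sum_inner_products_le (e j) (s := univ)
  have ht : ∑ j, t j ≤ k := by
    simp only [t]
    rw [sum_comm]
    simp [e.sum_sq_inner_right, hp.1 _, hι]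
  calc ∑ l, ⟪T (p l), p l⟫
      = ∑ j, hT.isSymmetric.eigenvalues hn j * t j := by
        simp only [hT.isSymmetric.inner_apply_self_eq_sum hn, t, mul_sum]
        exact sum_comm
    _ ≤ _ := sum_mul_le_sum_castLE_of_antitone hk (hT.isSymmetric.eigenvalues_antitone hn)
        (hT.nonneg_eigenvalues hn) (fun j => sum_nonneg fun l _ => sq_nonneg _) ht1 ht

theorem IsPositive.inner_le_trace [FiniteDimensional ℝ E] {T : E →ₗ[ℝ] E} (hT : T.IsPositive)
    {v : E} (hv : ‖v‖ = 1) : ⟪T v, v⟫ ≤ T.trace ℝ E := by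
  have hv' : Orthonormal ℝ ((↑) : ({v} : Set E) → E) := by
    classical
    rw [orthonormal_subtype_iff_ite]
    rintro x rfl y rfl
    simp [hv]
  obtain ⟨s, b, hvs, hb⟩ := hv'.exists_orthonormalBasis_extension
  rw [T.trace_eq_sum_inner b, real_inner_comm]
  calc ⟪v, T v⟫ = ⟪b ⟨v, hvs rfl⟩, T (b ⟨v, hvs rfl⟩)⟫ := by rw [hb]
    _ ≤ ∑ i, ⟪b i, T (b i)⟫ :=
      single_le_sum (fun i _ => hT.inner_nonneg_right (b i)) (mem_univ _)

theorem IsPositive.inner_le_sum_inner_of_mem {T : E →ₗ[ℝ] E} (hT : T.IsPositive)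
    {W : Submodule ℝ E} {ι : Type*} [Fintype ι] (b : OrthonormalBasis ι ℝ W) {u : E}
    (hu : u ∈ W) (hu1 : ‖u‖ = 1) : ⟪T u, u⟫ ≤ ∑ l, ⟪T (b l), b l⟫ := by
  have := Module.Finite.of_basis b.toBasis
  set C : W →ₗ[ℝ] W := W.orthogonalProjectionOnto.toLinearMap ∘ₗ T ∘ₗ W.subtype
  have hC : ∀ x y : W, ⟪C x, y⟫ = ⟪T x, y⟫ := fun x y =>
    W.inner_orthogonalProjectionOnto_eq_of_mem_right y (T x)
  have hCpos : C.IsPositive := by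
    refine (C.isPositive_iff).2 ⟨fun x y => ?_, fun x => ?_⟩
    · rw [hC, real_inner_comm (C y), hC, hT.isSymmetric]
      exact real_inner_comm _ _
    · simpa [hC] using hT.inner_nonneg_left x
  calc ⟪T u, u⟫ = ⟪C ⟨u, hu⟩, ⟨u, hu⟩⟫ := (hC ⟨u, hu⟩ ⟨u, hu⟩).symm
    _ ≤ C.trace ℝ W := hCpos.inner_le_trace (by simpa using hu1)
    _ = ∑ l, ⟪T (b l), b l⟫ := by
      rw [C.trace_eq_sum_inner b]
      exact sum_congr rfl fun l _ => by rw [real_inner_comm, hC]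

theorem IsSymmetric.eigenvalues_congr [FiniteDimensional ℝ E] {T S : E →ₗ[ℝ] E}
    (hT : T.IsSymmetric) (hS : S.IsSymmetric) (h : T = S) {n : ℕ} (hn : finrank ℝ E = n) :
    hT.eigenvalues hn = hS.eigenvalues hn := by
  subst h
  rfl

theorem IsPositive.sum_eigenvalues_zero_le_sum_eigenvalues_sum [FiniteDimensional ℝ E] {n k : ℕ}
    (hn : finrank ℝ E = n) (hk : k ≤ n) {T : Fin k → E →ₗ[ℝ] E} (hT : ∀ i, (T i).IsPositive) :
    ∑ i, (hT i).isSymmetric.eigenvalues hn ⟨0, i.pos.trans_le hk⟩ ≤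
      ∑ i : Fin k, (isPositive_sum univ fun i _ => hT i).isSymmetric.eigenvalues hn
        (Fin.castLE hk i) := by
  set u : Fin k → E := fun i => (hT i).isSymmetric.eigenvectorBasis hn ⟨0, i.pos.trans_le hk⟩
  set W := Submodule.span ℝ (Set.range u)
  set b := stdOrthonormalBasis ℝ W
  have hW : Fintype.card (Fin (finrank ℝ W)) ≤ k := by
    simpa [Set.finrank] using finrank_range_le_card (R := ℝ) u
  calc ∑ i, (hT i).isSymmetric.eigenvalues hn ⟨0, i.pos.trans_le hk⟩
      = ∑ i, ⟪T i (u i), u i⟫ := by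
        refine sum_congr rfl fun i _ => ?_
        simp [u, (hT i).isSymmetric.apply_eigenvectorBasis, real_inner_smul_left]
    _ ≤ ∑ i, ∑ l, ⟪T i (b l), b l⟫ := sum_le_sum fun i _ =>
        (hT i).inner_le_sum_inner_of_mem b (Submodule.subset_span ⟨i, rfl⟩)
          (((hT i).isSymmetric.eigenvectorBasis hn).norm_eq_one _)
    _ = ∑ l, ⟪(∑ i, T i) (b l), b l⟫ := by
        rw [sum_comm]
        simp [LinearMap.sum_apply, sum_inner]
    _ ≤ _ := (isPositive_sum univ fun i _ => hT i).sum_inner_le_sum_eigenvalues hn hk hW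
        (b.orthonormal.comp_linearIsometry W.subtypeₗᵢ)

end LinearMap

theorem stmt_4 {d k : ℕ} (hkd : k ≤ d)
    (M : Fin k → Matrix (Fin d) (Fin d) ℝ)
    (hpsd : ∀ i, (M i).PosSemidef)
    (hM : (∑ i, M i).IsHermitian) :
    ∑ i, kthEig (M i) (hpsd i).1 0 ≤ ∑ i : Fin k, kthEig (∑ j, M j) hM i := by
  have hkn : k ≤ Fintype.card (Fin d) := by simpa using hkd
  have hT : ∀ i, (Matrix.toEuclideanLin (M i)).IsPositive := fun i =>
    Matrix.isPositive_toEuclideanLin_iff.mpr (hpsd i)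
  calc ∑ i, kthEig (M i) (hpsd i).1 0
      = ∑ i, (hT i).isSymmetric.eigenvalues finrank_euclideanSpace ⟨0, i.pos.trans_le hkn⟩ :=
        sum_congr rfl fun i _ => kthEig_eq_eigenvalues₀ _ _
    _ ≤ _ := LinearMap.IsPositive.sum_eigenvalues_zero_le_sum_eigenvalues_sum
        finrank_euclideanSpace hkn hT
    _ = ∑ i : Fin k, kthEig (∑ j, M j) hM i := by
        refine sum_congr rfl fun i _ => ?_
        rw [kthEig_eq_eigenvalues₀ hM (i.2.trans_le hkn)]
        exact congrFun (LinearMap.IsSymmetric.eigenvalues_congr _ _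
          (map_sum Matrix.toEuclideanLin M univ).symm _) _
end

section
/- Let a, b > 0 and c, d ≥ 0 with c + d > 0. Then max{ √((a+b)² + c²) + d, c + √((a+b)² + d²) } > √(a² + c²) + √(b² + d²). -/
/-!
Write `p = √(a² + c²)`, `q = √(b² + d²)`, `s = √((a + b)² + d²)`. Since `s² - q² = a (a + 2b)` and
`p² - c² = a²`, the inequality `p + q < c + s` is `a² / (p + c) < a (a + 2b) / (s + q)`, which follows
from `a ≤ p`, `s ≤ a + q ≤ a + b + d` as soon as `2ad < (a + 2b) c`. If this fails, the mirror condition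
`2bc < (b + 2a) d` holds, since adding the two failures gives `ac + bd ≤ 0`; it yields
`p + q < √((a + b)² + c²) + d` in the same way.
-/

theorem Real.sqrt_add_sqrt_lt_add_sqrt_of_two_mul_mul_lt {a b c d : ℝ} (ha : 0 < a) (hb : 0 ≤ b)
    (hd : 0 ≤ d) (h : 2 * a * d < (a + 2 * b) * c) :
    √(a ^ 2 + c ^ 2) + √(b ^ 2 + d ^ 2) < c + √((a + b) ^ 2 + d ^ 2) := by
  set p := √(a ^ 2 + c ^ 2)
  set q := √(b ^ 2 + d ^ 2)
  set s := √((a + b) ^ 2 + d ^ 2)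
  have hc : 0 < c := by nlinarith
  have hp : p ^ 2 = a ^ 2 + c ^ 2 := Real.sq_sqrt (by positivity)
  have hq : q ^ 2 = b ^ 2 + d ^ 2 := Real.sq_sqrt (by positivity)
  have hs : s ^ 2 = (a + b) ^ 2 + d ^ 2 := Real.sq_sqrt (by positivity)
  have hap : a ≤ p := Real.le_sqrt_of_sq_le (by nlinarith)
  have hbq : b ≤ q := Real.le_sqrt_of_sq_le (by nlinarith)
  have hqbd : q ≤ b + d := (Real.sqrt_le_left (by positivity)).2 (by nlinarith)
  have hsaq : s ≤ a + q := (Real.sqrt_le_left (by positivity)).2 (by nlinarith)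
  have key : a * (s + q) < (a + 2 * b) * (p + c) := by nlinarith
  have hsq : 0 < s + q := by positivity
  have hpc : 0 < p + c := by positivity
  have hdiff : ((s - q) - (p - c)) * ((s + q) * (p + c))
      = a * ((a + 2 * b) * (p + c) - a * (s + q)) := by
    linear_combination (p + c) * hs - (p + c) * hq - (s + q) * hp
  have : 0 < (s - q) - (p - c) :=
    pos_of_mul_pos_left (hdiff ▸ mul_pos ha (sub_pos.2 key)) (mul_pos hsq hpc).le
  linarith

theorem stmt_7 (a b c d : ℝ) (ha : 0 < a) (hb : 0 < b) (hc : 0 ≤ c) (hd : 0 ≤ d)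
    (hcd : 0 < c + d) :
    Real.sqrt (a ^ 2 + c ^ 2) + Real.sqrt (b ^ 2 + d ^ 2) <
      max (Real.sqrt ((a + b) ^ 2 + c ^ 2) + d) (c + Real.sqrt ((a + b) ^ 2 + d ^ 2)) := by
  rcases lt_or_ge (2 * a * d) ((a + 2 * b) * c) with h | h
  · exact lt_max_of_lt_right (Real.sqrt_add_sqrt_lt_add_sqrt_of_two_mul_mul_lt ha hb.le hd h)
  · have hacbd : 0 < a * c + b * d := by
      nlinarith [mul_pos (lt_min ha hb) hcd, min_le_left a b, min_le_right a b]
    have h' : 2 * b * c < (b + 2 * a) * d := by nlinarith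
    have := Real.sqrt_add_sqrt_lt_add_sqrt_of_two_mul_mul_lt hb ha.le hc h'
    rw [add_comm b a] at this
    exact lt_max_of_lt_left (by linarith)
end

section
/- Any maximizer (ν₁,...,ν_k) of ∑_{i=1}^k ‖ν_i‖₂ subject to ν_i ∈ R^d_+ and ∑_i ν_i = ν ∈ R^d_+ has the property that for every pair i ≠ j, either ν_iᵀ ν_j = 0, or both ν_i and ν_j have exactly one positive entry and it is in the same position. -/
/-!
Suppose `w i` and `w j` share a positive coordinate `s`, with `p = w i s` and `q = w j s`.
Moving the mass `q e_s` from `w j` to `w i`, or `p e_s` from `w i` to `w j`, keeps the point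
feasible, so neither move increases `‖w i‖ + ‖w j‖`. The original pair is the convex combination
of the two moved pairs with weights `p / (p + q)` and `q / (p + q)`, so the triangle inequality
must be an equality for both `w i` and `w j`. Strict convexity of the Euclidean norm then puts
`w i + q e_s` and `w i - p e_s` on a common ray; the latter vanishes at `s`, hence is zero, i.e.
`w i = p e_s`. Symmetrically `w j = q e_s`.
-/

open Finset

/-- Euclidean norm of a vector in `ℝ^d`. -/
noncomputable def vnorm {d : ℕ} (v : Fin d → ℝ) : ℝ := Real.sqrt (∑ t, v t ^ 2)

lemma vnorm_eq_norm {d : ℕ} (v : Fin d → ℝ) : vnorm v = ‖WithLp.toLp 2 v‖ := by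
  simp [vnorm, EuclideanSpace.norm_eq]

lemma vnorm_smul_add_smul_le {d : ℕ} (u v : Fin d → ℝ) {a b : ℝ} (ha : 0 ≤ a) (hb : 0 ≤ b) :
    vnorm (a • u + b • v) ≤ a * vnorm u + b * vnorm v := by
  simpa [vnorm_eq_norm, WithLp.toLp_add, WithLp.toLp_smul, norm_smul, abs_of_nonneg ha,
    abs_of_nonneg hb] using norm_add_le (a • WithLp.toLp 2 u) (b • WithLp.toLp 2 v)

lemma sameRay_of_vnorm_smul_add_smul {d : ℕ} {u v : Fin d → ℝ} {a b : ℝ} (ha : 0 < a)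
    (hb : 0 < b) (h : a * vnorm u + b * vnorm v ≤ vnorm (a • u + b • v)) : SameRay ℝ u v := by
  set x := WithLp.toLp 2 u
  set y := WithLp.toLp 2 v
  have hxy : SameRay ℝ (a • x) (b • y) := by
    refine sameRay_iff_norm_add.mpr (le_antisymm (norm_add_le _ _) ?_)
    simpa [vnorm_eq_norm, x, y, norm_smul, abs_of_pos ha, abs_of_pos hb] using h
  have := ((hxy.pos_smul_left (inv_pos.mpr ha)).pos_smul_right (inv_pos.mpr hb)).map
    (WithLp.linearEquiv 2 ℝ (Fin d → ℝ)).toLinearMap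
  simpa [inv_smul_smul₀ ha.ne', inv_smul_smul₀ hb.ne', x, y] using this

lemma SameRay.eq_zero_of_apply_pos_of_apply_eq_zero {ι : Type*} {x y : ι → ℝ}
    (h : SameRay ℝ x y) {s : ι} (hx : 0 < x s) (hy : y s = 0) : y = 0 := by
  by_contra hy0
  obtain ⟨r₁, r₂, hr₁, -, hr⟩ := h.exists_pos (fun hx0 => by simp [hx0] at hx) hy0
  have := congr_fun hr s
  simp only [Pi.smul_apply, smul_eq_mul, hy, mul_zero] at this
  exact (mul_pos hr₁ hx).ne' this

lemma smul_add_single_add_smul_sub_single {ι : Type*} [DecidableEq ι] (x : ι → ℝ) (s : ι)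
    {a b p q : ℝ} (hab : a + b = 1) (h : a * q = b * p) :
    a • (x + Pi.single s q) + b • (x - Pi.single s p) = x := by
  ext t
  rcases eq_or_ne t s with rfl | hts
  · simp only [Pi.add_apply, Pi.sub_apply, Pi.smul_apply, Pi.single_eq_same, smul_eq_mul]
    linear_combination x t * hab + h
  · simp [hts, ← add_mul, hab]

section Maximizer

variable {d k : ℕ} {ν : Fin d → ℝ} {w : Fin k → Fin d → ℝ}

lemma vnorm_add_vnorm_sub_le (hw : ∀ i t, 0 ≤ w i t) (hsum : ∀ t, ∑ i, w i t = ν t)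
    (hmax : ∀ v : Fin k → Fin d → ℝ, (∀ i t, 0 ≤ v i t) → (∀ t, ∑ i, v i t = ν t) →
      ∑ i, vnorm (v i) ≤ ∑ i, vnorm (w i))
    {i j : Fin k} (hij : i ≠ j) (δ : Fin d → ℝ)
    (hi : ∀ t, 0 ≤ w i t + δ t) (hj : ∀ t, 0 ≤ w j t - δ t) :
    vnorm (w i + δ) + vnorm (w j - δ) ≤ vnorm (w i) + vnorm (w j) := by
  classical
  set v := w + Pi.single i δ - Pi.single j δ
  have hvi : v i = w i + δ := by simp [v, hij]
  have hvj : v j = w j - δ := by simp [v, hij.symm]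
  have hv_nonneg : ∀ r t, 0 ≤ v r t := by
    intro r t
    rcases eq_or_ne r i with rfl | hri
    · exact hvi ▸ hi t
    rcases eq_or_ne r j with rfl | hrj
    · exact hvj ▸ hj t
    simpa [v, hri, hrj] using hw r t
  have hv_sum : ∀ t, ∑ r, v r t = ν t := by
    intro t
    simp [v, sum_add_distrib, sum_sub_distrib, Pi.single_apply, ite_apply, hsum]
  have hdiff : ∑ r, (vnorm (v r) - vnorm (w r)) =
      (vnorm (v i) - vnorm (w i)) + (vnorm (v j) - vnorm (w j)) :=
    Fintype.sum_eq_add i j hij fun r ⟨hri, hrj⟩ => by simp [v, hri, hrj]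
  have := hmax v hv_nonneg hv_sum
  rw [sum_sub_distrib, hvi, hvj] at hdiff
  linarith

lemma apply_eq_zero_of_pos_of_pos (hw : ∀ i t, 0 ≤ w i t) (hsum : ∀ t, ∑ i, w i t = ν t)
    (hmax : ∀ v : Fin k → Fin d → ℝ, (∀ i t, 0 ≤ v i t) → (∀ t, ∑ i, v i t = ν t) →
      ∑ i, vnorm (v i) ≤ ∑ i, vnorm (w i))
    {i j : Fin k} (hij : i ≠ j) {s : Fin d}
    (hi : 0 < w i s) (hj : 0 < w j s) {m : Fin d} (hm : m ≠ s) : w i m = 0 := by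
  set p := w i s
  set q := w j s
  have hpq : 0 < p + q := add_pos hi hj
  set a := p / (p + q)
  set b := q / (p + q)
  have ha : 0 < a := div_pos hi hpq
  have hb : 0 < b := div_pos hj hpq
  have hab : a + b = 1 := by rw [← add_div, div_self hpq.ne']
  have hqp : a * q = b * p := by simp only [a, b]; ring
  have add_single_nonneg :
      ∀ r (c : ℝ), 0 ≤ c → ∀ t, 0 ≤ w r t + (Pi.single s c : Fin d → ℝ) t :=
    fun r c hc t => add_nonneg (hw r t) (by rw [Pi.single_apply]; split_ifs <;> simp [hc])
  have sub_single_nonneg : ∀ r t, 0 ≤ w r t - (Pi.single s (w r s) : Fin d → ℝ) t := by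
    intro r t
    rcases eq_or_ne t s with rfl | hts
    · simp
    · simpa [hts] using hw r t
  have to_i := vnorm_add_vnorm_sub_le hw hsum hmax hij (Pi.single s q)
    (add_single_nonneg i q hj.le) (sub_single_nonneg j)
  have to_j := vnorm_add_vnorm_sub_le hw hsum hmax hij.symm (Pi.single s p)
    (add_single_nonneg j p hi.le) (sub_single_nonneg i)
  have tri_j := vnorm_smul_add_smul_le (w j + Pi.single s p) (w j - Pi.single s q) hb.le ha.le
  rw [smul_add_single_add_smul_sub_single _ _ (by linarith) hqp.symm] at tri_j
  have tri_i_eq : a * vnorm (w i + Pi.single s q) + b * vnorm (w i - Pi.single s p) ≤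
      vnorm (a • (w i + Pi.single s q) + b • (w i - Pi.single s p)) := by
    rw [smul_add_single_add_smul_sub_single _ _ hab hqp]
    linear_combination a * to_i + b * to_j + tri_j + (vnorm (w i) + vnorm (w j)) * hab
  have hray := sameRay_of_vnorm_smul_add_smul ha hb tri_i_eq
  have hzero := hray.eq_zero_of_apply_pos_of_apply_eq_zero (s := s) (by simpa using hpq)
    (by simp [p])
  simpa [hm] using congr_fun hzero m

end Maximizer

theorem stmt_9_general {d k : ℕ} (ν : Fin d → ℝ)
    (w : Fin k → Fin d → ℝ) (hw : ∀ i t, 0 ≤ w i t) (hsum : ∀ t, ∑ i, w i t = ν t)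
    (hmax : ∀ v : Fin k → Fin d → ℝ, (∀ i t, 0 ≤ v i t) → (∀ t, ∑ i, v i t = ν t) →
      ∑ i, vnorm (v i) ≤ ∑ i, vnorm (w i)) :
    ∀ i j, i ≠ j →
      (∑ t, w i t * w j t = 0) ∨
      (∃ ℓ : Fin d, 0 < w i ℓ ∧ 0 < w j ℓ ∧
        ∀ m : Fin d, m ≠ ℓ → w i m = 0 ∧ w j m = 0) := by
  intro i j hij
  by_cases h0 : ∑ t, w i t * w j t = 0
  · exact Or.inl h0
  obtain ⟨s, -, hs⟩ := exists_ne_zero_of_sum_ne_zero h0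
  have hi : 0 < w i s := (hw i s).lt_of_ne' (left_ne_zero_of_mul hs)
  have hj : 0 < w j s := (hw j s).lt_of_ne' (right_ne_zero_of_mul hs)
  exact Or.inr ⟨s, hi, hj, fun m hm =>
    ⟨apply_eq_zero_of_pos_of_pos hw hsum hmax hij hi hj hm,
      apply_eq_zero_of_pos_of_pos hw hsum hmax hij.symm hj hi hm⟩⟩

theorem stmt_9 {d k : ℕ} (ν : Fin d → ℝ) (hν : ∀ t, 0 ≤ ν t)
    (w : Fin k → Fin d → ℝ) (hw : ∀ i t, 0 ≤ w i t) (hsum : ∀ t, ∑ i, w i t = ν t)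
    (hmax : ∀ v : Fin k → Fin d → ℝ, (∀ i t, 0 ≤ v i t) → (∀ t, ∑ i, v i t = ν t) →
      ∑ i, vnorm (v i) ≤ ∑ i, vnorm (w i)) :
    ∀ i j, i ≠ j →
      (∑ t, w i t * w j t = 0) ∨
      (∃ ℓ : Fin d, 0 < w i ℓ ∧ 0 < w j ℓ ∧
        ∀ m : Fin d, m ≠ ℓ → w i m = 0 ∧ w j m = 0) :=
  stmt_9_general ν w hw hsum hmax
end

section
/- Fix d ≥ 2 and k ≥ 2 with k ≤ d, and fix positive integers d₁,...,d_k summing to d that maximize √d₁ + ... + √d_k over all such integer compositions. Then for any vectors ν₁,...,ν_k ∈ R^d_+ with ∑_i ν_i = μ(1,...,1)ᵀ for some μ > 0, one has ∑_{i=1}^k ‖ν_i‖₂ ≤ μ(√d₁ + ... + √d_k). -/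
open Finset

section UnitDirection

variable {d : ℕ}

theorem vnorm_sq (v : Fin d → ℝ) : vnorm v ^ 2 = ∑ t, v t ^ 2 :=
  Real.sq_sqrt (sum_nonneg fun _ _ => sq_nonneg _)

/-- `v / ‖v‖`, which is `0` for `v = 0` since `0⁻¹ = 0`. -/
noncomputable def unitDir (v : Fin d → ℝ) : Fin d → ℝ := (vnorm v)⁻¹ • v

theorem sum_sq_unitDir_le_one (v : Fin d → ℝ) : ∑ t, unitDir v t ^ 2 ≤ 1 := by
  have h : ∑ t, unitDir v t ^ 2 = ((vnorm v)⁻¹ * vnorm v) ^ 2 := by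
    simp only [unitDir, Pi.smul_apply, smul_eq_mul, mul_pow, ← mul_sum, ← vnorm_sq]
  rw [h]
  exact pow_le_one₀ (mul_nonneg (inv_nonneg.mpr (Real.sqrt_nonneg _)) (Real.sqrt_nonneg _))
    inv_mul_le_one

theorem vnorm_eq_sum_mul_unitDir (v : Fin d → ℝ) : vnorm v = ∑ t, v t * unitDir v t := by
  have h : ∑ t, v t * unitDir v t = (vnorm v)⁻¹ * vnorm v ^ 2 := by
    simp only [unitDir, Pi.smul_apply, smul_eq_mul, vnorm_sq, mul_sum]
    exact sum_congr rfl fun t _ => by ring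
  rw [h]
  by_cases h0 : vnorm v = 0
  · simp [h0]
  · field_simp

end UnitDirection

theorem sum_le_sqrt_card_of_sum_sq_le_one {α : Type*} [Fintype α] {u : α → ℝ}
    (hu : ∑ t, u t ^ 2 ≤ 1) (s : Finset α) : ∑ t ∈ s, u t ≤ Real.sqrt #s := by
  refine (le_abs_self _).trans (Real.abs_le_sqrt ?_)
  calc (∑ t ∈ s, u t) ^ 2 ≤ #s * ∑ t ∈ s, u t ^ 2 := sq_sum_le_card_mul_sum_sq
    _ ≤ #s * 1 := by
        gcongr
        exact (sum_le_sum_of_subset_of_nonneg (subset_univ s) fun t _ _ => sq_nonneg _).trans hu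
    _ = #s := mul_one _

theorem sum_apply_le_sum_sqrt_card_fiber {ι α : Type*} [Fintype ι] [DecidableEq ι] [Fintype α]
    (u : ι → α → ℝ) (hu : ∀ i, ∑ t, u i t ^ 2 ≤ 1) (j : α → ι) :
    ∑ t, u (j t) t ≤ ∑ i, Real.sqrt #{t | j t = i} := by
  rw [← sum_fiberwise univ j]
  refine sum_le_sum fun i _ => ?_
  calc ∑ t with j t = i, u (j t) t = ∑ t with j t = i, u i t :=
        sum_congr rfl fun t ht => by rw [(mem_filter.mp ht).2]
    _ ≤ Real.sqrt #{t | j t = i} := sum_le_sqrt_card_of_sum_sq_le_one (hu i) _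

theorem exists_composition_sum_vnorm_le {ι : Type*} [Fintype ι] [Nonempty ι] {d : ℕ}
    (ν : ι → Fin d → ℝ) (hν : ∀ i t, 0 ≤ ν i t) {μ : ℝ} (hμ : 0 ≤ μ)
    (hsum : ∀ t, ∑ i, ν i t = μ) :
    ∃ e : ι → ℕ, ∑ i, e i = d ∧ ∑ i, vnorm (ν i) ≤ μ * ∑ i, Real.sqrt (e i) := by
  classical
  set u : ι → Fin d → ℝ := fun i => unitDir (ν i)
  choose j hj using fun t => Finite.exists_max fun i => u i t
  refine ⟨fun i => #{t | j t = i}, ?_, ?_⟩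
  · simpa using (card_eq_sum_card_fiberwise (s := univ) fun t _ => mem_univ (j t)).symm
  have hcolumn : ∀ t, ∑ i, ν i t * u i t ≤ μ * u (j t) t := fun t =>
    calc ∑ i, ν i t * u i t ≤ ∑ i, ν i t * u (j t) t :=
          sum_le_sum fun i _ => mul_le_mul_of_nonneg_left (hj t i) (hν i t)
      _ = μ * u (j t) t := by rw [← sum_mul, hsum t]
  calc ∑ i, vnorm (ν i) = ∑ t, ∑ i, ν i t * u i t := by
        simp only [u, vnorm_eq_sum_mul_unitDir]
        exact sum_comm
    _ ≤ ∑ t, μ * u (j t) t := sum_le_sum fun t _ => hcolumn t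
    _ = μ * ∑ t, u (j t) t := (mul_sum _ _ _).symm
    _ ≤ μ * ∑ i, Real.sqrt #{t | j t = i} := by
        gcongr
        exact sum_apply_le_sum_sqrt_card_fiber u (fun i => sum_sq_unitDir_le_one _) j

theorem stmt_10_general {d k : ℕ} (ds : Fin k → ℕ)
    (hmax : ∀ es : Fin k → ℕ, ∑ i, es i = d →
      ∑ i, Real.sqrt (es i) ≤ ∑ i, Real.sqrt (ds i))
    (μ : ℝ) (hμ : 0 < μ)
    (ν : Fin k → Fin d → ℝ) (hν : ∀ i t, 0 ≤ ν i t)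
    (hsum : ∀ t, ∑ i, ν i t = μ) :
    ∑ i, vnorm (ν i) ≤ μ * ∑ i, Real.sqrt (ds i) := by
  rcases isEmpty_or_nonempty (Fin k) with _ | _
  · simp
  obtain ⟨e, he, hle⟩ := exists_composition_sum_vnorm_le ν hν hμ.le hsum
  exact hle.trans (mul_le_mul_of_nonneg_left (hmax e he) hμ.le)

theorem stmt_10 {d k : ℕ} (hd : 2 ≤ d) (hk : 2 ≤ k) (hkd : k ≤ d)
    (ds : Fin k → ℕ) (hpos : ∀ i, 0 < ds i) (hsumd : ∑ i, ds i = d)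
    (hmax : ∀ es : Fin k → ℕ, ∑ i, es i = d →
      ∑ i, Real.sqrt (es i) ≤ ∑ i, Real.sqrt (ds i))
    (μ : ℝ) (hμ : 0 < μ)
    (ν : Fin k → Fin d → ℝ) (hν : ∀ i t, 0 ≤ ν i t)
    (hsum : ∀ t, ∑ i, ν i t = μ) :
    ∑ i, vnorm (ν i) ≤ μ * ∑ i, Real.sqrt (ds i) :=
  stmt_10_general ds hmax μ hμ ν hν hsum
end

section
/- Let X be a random vector in the positive part of the unit sphere of R^d, x₁,...,x_k ∈ S (the positive unit sphere), and let (A₁,...,A_k) be the Voronoi partition A_i = {y ∈ S : x_iᵀy ≥ x_jᵀy ∀ j > i and x_iᵀy > x_jᵀy ∀ j < i}. Define x̄_i = E(X 1{X∈A_i}) / ‖E(X 1{X∈A_i})‖ (with x̄_i = x_i when P(X∈A_i) = 0). Then E(max_{i≤k} x_iᵀ X) ≤ E(max_{i≤k} x̄_iᵀ X). -/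
open MeasureTheory Matrix

/-- The Voronoi cell of the centroid `x i` among `x 1, …, x k` (ties broken in favour
of the smallest index), intersected with the positive unit sphere `S`. -/
def voronoiCell {d k : ℕ} (S : Set (Fin d → ℝ)) (x : Fin k → Fin d → ℝ) (i : Fin k) :
    Set (Fin d → ℝ) :=
  {y ∈ S | (∀ j, i < j → x j ⬝ᵥ y ≤ x i ⬝ᵥ y) ∧ (∀ j, j < i → x j ⬝ᵥ y < x i ⬝ᵥ y)}

/-!
On the cell `A i` the largest of the `x j ⬝ᵥ X` is `x i ⬝ᵥ X`, so the left side is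
`∑ i, x i ⬝ᵥ m i` with `m i = E[X; X ∈ A i]`. By Cauchy–Schwarz `x i ⬝ᵥ m i ≤ ‖m i‖ = x̄ i ⬝ᵥ m i`,
and `x̄ i ⬝ᵥ m i = E[x̄ i ⬝ᵥ X; X ∈ A i]` is at most the integral over `A i` of the largest of the
`x̄ j ⬝ᵥ X`. Summing over the cells gives the claim.
-/

section Integrals

variable {Ω ι : Type*} {mΩ : MeasurableSpace Ω} {μ : Measure Ω}

theorem abs_ciSup_le_sum_abs [Fintype ι] (a : ι → ℝ) : |⨆ i, a i| ≤ ∑ i, |a i| := by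
  cases isEmpty_or_nonempty ι
  · simp
  have hle : ∀ i, |a i| ≤ ∑ j, |a j| := fun i =>
    Finset.single_le_sum (fun j _ => abs_nonneg (a j)) (Finset.mem_univ i)
  obtain ⟨i₀⟩ := ‹Nonempty ι›
  rw [abs_le]
  constructor
  · exact (neg_le_of_abs_le (hle i₀)).trans (le_ciSup (Finite.bddAbove_range a) i₀)
  · exact ciSup_le fun i => (le_abs_self _).trans (hle i)

theorem integrable_iSup [Fintype ι] {f : ι → Ω → ℝ} (hf : ∀ i, Integrable (f i) μ) :
    Integrable (fun ω => ⨆ i, f i ω) μ :=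
  (integrable_finsetSum Finset.univ fun i _ => (hf i).abs).mono'
    (AEMeasurable.iSup fun i => (hf i).aemeasurable).aestronglyMeasurable
    (ae_of_all _ fun ω => abs_ciSup_le_sum_abs fun i => f i ω)

theorem integral_eq_sum_setIntegral_of_ae_cover [Fintype ι] {B : ι → Set Ω}
    (hB : ∀ i, MeasurableSet (B i)) (hBd : Pairwise (Function.onFun Disjoint B))
    (hcover : ∀ᵐ ω ∂μ, ∃ i, ω ∈ B i) {f : Ω → ℝ} (hf : Integrable f μ) :
    ∫ ω, f ω ∂μ = ∑ i, ∫ ω in B i, f ω ∂μ := by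
  rw [integral_eq_setIntegral (s := ⋃ i, B i) (by simpa only [Set.mem_iUnion] using hcover),
    integral_iUnion_fintype hB hBd fun i => hf.integrableOn]

theorem integral_iSup_le_of_ae_cover [Fintype ι] {B : ι → Set Ω}
    (hB : ∀ i, MeasurableSet (B i)) (hBd : Pairwise (Function.onFun Disjoint B))
    (hcover : ∀ᵐ ω ∂μ, ∃ i, ω ∈ B i) {f g : ι → Ω → ℝ}
    (hf : ∀ i, Integrable (f i) μ) (hg : ∀ i, Integrable (g i) μ)
    (hmax : ∀ i, ∀ ω ∈ B i, ∀ j, f j ω ≤ f i ω)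
    (hcell : ∀ i, ∫ ω in B i, f i ω ∂μ ≤ ∫ ω in B i, g i ω ∂μ) :
    ∫ ω, ⨆ i, f i ω ∂μ ≤ ∫ ω, ⨆ i, g i ω ∂μ := by
  rw [integral_eq_sum_setIntegral_of_ae_cover hB hBd hcover (integrable_iSup hf),
    integral_eq_sum_setIntegral_of_ae_cover hB hBd hcover (integrable_iSup hg)]
  refine Finset.sum_le_sum fun i _ => ?_
  have : Nonempty ι := ⟨i⟩
  calc ∫ ω in B i, ⨆ j, f j ω ∂μ = ∫ ω in B i, f i ω ∂μ :=
        setIntegral_congr_fun (hB i) fun ω hω =>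
          le_antisymm (ciSup_le (hmax i ω hω))
            (le_ciSup (Finite.bddAbove_range fun j => f j ω) i)
    _ ≤ ∫ ω in B i, g i ω ∂μ := hcell i
    _ ≤ ∫ ω in B i, ⨆ j, g j ω ∂μ :=
        integral_mono (hg i).integrableOn (integrable_iSup hg).integrableOn
          fun ω => le_ciSup (Finite.bddAbove_range fun j => g j ω) i

theorem integrable_dotProduct [Fintype ι] (v : ι → ℝ) {X : Ω → ι → ℝ}
    (hX : ∀ t, Integrable (fun ω => X ω t) μ) : Integrable (fun ω => v ⬝ᵥ X ω) μ :=
  integrable_finsetSum _ fun t _ => (hX t).const_mul (v t)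

theorem integral_dotProduct [Fintype ι] (v : ι → ℝ) {X : Ω → ι → ℝ}
    (hX : ∀ t, Integrable (fun ω => X ω t) μ) :
    ∫ ω, v ⬝ᵥ X ω ∂μ = v ⬝ᵥ fun t => ∫ ω, X ω t ∂μ := by
  simp only [dotProduct]
  rw [integral_finsetSum _ fun t _ => (hX t).const_mul (v t)]
  simp only [integral_const_mul]

end Integrals

section Voronoi

variable {d k : ℕ} (S : Set (Fin d → ℝ)) (x : Fin k → Fin d → ℝ)

/-- Among the indices maximising `x j ⬝ᵥ y`, the smallest one labels a cell containing `y`. -/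
theorem exists_mem_voronoiCell [NeZero k] {y : Fin d → ℝ} (hy : y ∈ S) :
    ∃ i, y ∈ voronoiCell S x i := by
  obtain ⟨i₀, -, hi₀⟩ := Finset.exists_max_image Finset.univ (fun j => x j ⬝ᵥ y)
    Finset.univ_nonempty
  let T : Set (Fin k) := {i | ∀ j, x j ⬝ᵥ y ≤ x i ⬝ᵥ y}
  have hT : T.Nonempty := ⟨i₀, fun j => hi₀ j (Finset.mem_univ j)⟩
  have hmax : ∀ j, x j ⬝ᵥ y ≤ x (wellFounded_lt.min T hT) ⬝ᵥ y :=
    wellFounded_lt.min_mem T hT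
  refine ⟨wellFounded_lt.min T hT, hy, fun j _ => hmax j, fun j hj => ?_⟩
  by_contra hle
  exact wellFounded_lt.not_lt_min T (x := j) (fun j' => (hmax j').trans (not_lt.mp hle)) hj

theorem pairwise_disjoint_voronoiCell : Pairwise (Function.onFun Disjoint (voronoiCell S x)) := by
  intro i i' hii'
  rw [Function.onFun, Set.disjoint_left]
  rintro y ⟨-, hgt, hlt⟩ ⟨-, hgt', hlt'⟩
  rcases hii'.lt_or_gt with h | h
  · exact (hgt i' h).not_gt (hlt' i h)
  · exact (hgt' i h).not_gt (hlt i' h)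

theorem measurableSet_voronoiCell (hS : MeasurableSet S) (i : Fin k) :
    MeasurableSet (voronoiCell S x i) := by
  have hdot : ∀ v : Fin d → ℝ, Measurable fun y : Fin d → ℝ => v ⬝ᵥ y := fun v =>
    (continuous_const.dotProduct continuous_id).measurable
  refine hS.inter (measurableSet_setOfPred.mpr (.and ?_ ?_)) <;>
    refine .forall fun j => .imp measurable_const ?_
  · exact measurableSet_setOfPred.mp (measurableSet_le (hdot _) (hdot _))
  · exact measurableSet_setOfPred.mp (measurableSet_lt (hdot _) (hdot _))

theorem dotProduct_le_of_mem_voronoiCell {i : Fin k} {y : Fin d → ℝ}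
    (hy : y ∈ voronoiCell S x i) (j : Fin k) : x j ⬝ᵥ y ≤ x i ⬝ᵥ y := by
  obtain ⟨-, hgt, hlt⟩ := hy
  rcases lt_trichotomy i j with h | rfl | h
  · exact hgt j h
  · exact le_rfl
  · exact (hlt j h).le

end Voronoi

section UnitSphere

variable {d : ℕ}

theorem abs_le_one_of_sum_sq_eq_one {n : Type*} [Fintype n] {y : n → ℝ}
    (hy : ∑ t, y t ^ 2 = 1) (t : n) : |y t| ≤ 1 :=
  (sq_le_one_iff_abs_le_one _).mp <|
    hy ▸ Finset.single_le_sum (fun s _ => sq_nonneg (y s)) (Finset.mem_univ t)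

theorem dotProduct_le_vnorm_mul_vnorm (v w : Fin d → ℝ) : v ⬝ᵥ w ≤ vnorm v * vnorm w :=
  Real.sum_mul_le_sqrt_mul_sqrt _ v w

theorem inv_vnorm_smul_dotProduct_self (w : Fin d → ℝ) :
    ((vnorm w)⁻¹ • w) ⬝ᵥ w = vnorm w := by
  have hww : w ⬝ᵥ w = vnorm w ^ 2 := by
    rw [vnorm, Real.sq_sqrt (Finset.sum_nonneg fun t _ => sq_nonneg (w t))]
    simp only [dotProduct, sq]
  rw [smul_dotProduct, hww, smul_eq_mul]
  rcases eq_or_ne (vnorm w) 0 with h | h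
  · simp [h]
  · field_simp

theorem dotProduct_le_inv_vnorm_smul_dotProduct {v : Fin d → ℝ} (hv : ∑ t, v t ^ 2 = 1)
    (m : Fin d → ℝ) : v ⬝ᵥ m ≤ ((vnorm m)⁻¹ • m) ⬝ᵥ m := by
  have hv1 : vnorm v = 1 := by rw [vnorm, hv, Real.sqrt_one]
  rw [inv_vnorm_smul_dotProduct_self]
  simpa [hv1] using dotProduct_le_vnorm_mul_vnorm v m

end UnitSphere

theorem stmt_12_general {d k : ℕ} (hk : 1 ≤ k) {Ω : Type*} [MeasureSpace Ω]
    [IsProbabilityMeasure (volume : Measure Ω)]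
    (S : Set (Fin d → ℝ)) (hSdef : S = {y | (∀ t, 0 ≤ y t) ∧ ∑ t, y t ^ 2 = 1})
    (X : Ω → Fin d → ℝ) (hXmeas : Measurable X) (hXS : ∀ᵐ ω, X ω ∈ S)
    (x : Fin k → Fin d → ℝ) (hx : ∀ i, x i ∈ S)
    (m : Fin k → Fin d → ℝ)
    (hm : ∀ i t, m i t = ∫ ω in {ω | X ω ∈ voronoiCell S x i}, X ω t)
    (xbar : Fin k → Fin d → ℝ)
    (hxbar1 : ∀ i, volume {ω | X ω ∈ voronoiCell S x i} ≠ 0 →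
      xbar i = (vnorm (m i))⁻¹ • m i) :
    ∫ ω, ⨆ i : Fin k, x i ⬝ᵥ X ω ≤ ∫ ω, ⨆ i : Fin k, xbar i ⬝ᵥ X ω := by
  have : NeZero k := ⟨by omega⟩
  have hS : MeasurableSet S := by
    rw [hSdef]
    measurability
  have hunit : ∀ y ∈ S, ∑ t, y t ^ 2 = 1 := fun y hy => (hSdef ▸ hy).2
  have hX : ∀ t, Integrable (fun ω => X ω t) :=
    fun t => Integrable.of_bound (measurable_pi_apply t |>.comp hXmeas).aestronglyMeasurable 1
      (by filter_upwards [hXS] with ω hω using abs_le_one_of_sum_sq_eq_one (hunit _ hω) t)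
  refine integral_iSup_le_of_ae_cover (B := fun i => {ω | X ω ∈ voronoiCell S x i})
    (fun i => hXmeas (measurableSet_voronoiCell S x hS i))
    (fun i j hij => (pairwise_disjoint_voronoiCell S x hij).preimage X)
    (by filter_upwards [hXS] with ω hω using exists_mem_voronoiCell S x hω)
    (fun i => integrable_dotProduct _ hX) (fun i => integrable_dotProduct _ hX)
    (fun i ω hω j => dotProduct_le_of_mem_voronoiCell S x hω j) fun i => ?_
  by_cases h0 : volume {ω | X ω ∈ voronoiCell S x i} = 0
  · simp [Measure.restrict_eq_zero.mpr h0]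
  rw [integral_dotProduct _ fun t => (hX t).restrict,
    integral_dotProduct _ fun t => (hX t).restrict, ← funext (hm i), hxbar1 i h0]
  exact dotProduct_le_inv_vnorm_smul_dotProduct (hunit _ (hx i)) (m i)

theorem stmt_12 {d k : ℕ} (hd : 2 ≤ d) (hk : 1 ≤ k) {Ω : Type*} [MeasureSpace Ω]
    [IsProbabilityMeasure (volume : Measure Ω)]
    (S : Set (Fin d → ℝ)) (hSdef : S = {y | (∀ t, 0 ≤ y t) ∧ ∑ t, y t ^ 2 = 1})
    (X : Ω → Fin d → ℝ) (hXmeas : Measurable X) (hXS : ∀ᵐ ω, X ω ∈ S)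
    (x : Fin k → Fin d → ℝ) (hx : ∀ i, x i ∈ S)
    (m : Fin k → Fin d → ℝ)
    (hm : ∀ i t, m i t = ∫ ω in {ω | X ω ∈ voronoiCell S x i}, X ω t)
    (xbar : Fin k → Fin d → ℝ)
    (hxbar0 : ∀ i, volume {ω | X ω ∈ voronoiCell S x i} = 0 → xbar i = x i)
    (hxbar1 : ∀ i, volume {ω | X ω ∈ voronoiCell S x i} ≠ 0 →
      xbar i = (vnorm (m i))⁻¹ • m i) :
    ∫ ω, ⨆ i : Fin k, x i ⬝ᵥ X ω ≤ ∫ ω, ⨆ i : Fin k, xbar i ⬝ᵥ X ω :=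
  stmt_12_general hk S hSdef X hXmeas hXS x hx m hm xbar hxbar1
end

section
/- Suppose X is a random vector in the positive part of the unit sphere of R^d whose law is supported on the union of mutually orthogonal faces F_{I₁},...,F_{I_k} corresponding to a partition (I₁,...,I_k) of {1,...,d}, where F_I = {x ∈ R^d_+ : x_j = 0 ∀ j ∉ I}. Let p_I = P(X ∈ F_I) > 0, and let Σ_{I_u} be the |I_u|×|I_u| cross-moment matrix of X restricted to indices I_u conditional on X ∈ F_{I_u}, so that Σ = E(XXᵀ) is block diagonal with blocks p_{I_u}Σ_{I_u}. If min_{u} p_{I_u} λ₁(Σ_{I_u}) ≥ max_{u} p_{I_u} λ₂(Σ_{I_u}), then for every partition (A₁,...,A_k) of the positive unit sphere into Borel sets, ∑_{u=1}^k p_{I_u} λ₁(Σ_{I_u}) ≥ ∑_{i=1}^k λ₁(E(X Xᵀ 1{X∈A_i})). -/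
open MeasureTheory Matrix

/-- The face `F_I = {y ∈ ℝ^d_+ : y_j = 0 ∀ j ∉ I}` of the nonnegative orthant. -/
def face {d : ℕ} (I : Finset (Fin d)) : Set (Fin d → ℝ) :=
  {y | (∀ t, 0 ≤ y t) ∧ ∀ j ∉ I, y j = 0}

/-!
Write `M_i = E(X Xᵀ 1{X ∈ A_i})` and `D_u = E(X Xᵀ 1{X ∈ F_{I_u}})`. Both families are positive
semidefinite and sum to `Σ = E(X Xᵀ)`: two faces meet only at `0`, which is off the sphere.
Let `v_i` be a top unit eigenvector of `M_i` and `w_1, …, w_r` (`r ≤ k`) an orthonormal basis of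
the span of the `v_i`. As `M_i ⪰ 0`, Cauchy–Schwarz gives
`λ₁(M_i) = v_iᵀ M_i v_i ≤ ∑_m w_mᵀ M_i w_m`, hence
`∑_i λ₁(M_i) ≤ ∑_m w_mᵀ Σ w_m = ∑_u ∑_m w_mᵀ D_u w_m`.
Put `t = min_u λ₁(D_u)`; by the balance assumption `λ₂(D_u) ≤ t`, so with `e_u` a top unit
eigenvector of `D_u` and `P_u` the coordinate projection onto `I_u`,
`xᵀ D_u x = (P_u x)ᵀ D_u (P_u x) ≤ (λ₁(D_u) - t) ⟪P_u e_u, x⟫² + t ‖P_u x‖²`.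
Summing over `m` (Bessel) and over `u` (the `I_u` are disjoint) bounds `∑_u ∑_m w_mᵀ D_u w_m` by
`∑_u λ₁(D_u) - k t + r t ≤ ∑_u λ₁(D_u)`.
-/

open scoped InnerProductSpace
open Function

section coordProj

variable {n : Type*} [DecidableEq n]

noncomputable def coordProj (I : Finset n) (x : EuclideanSpace ℝ n) : EuclideanSpace ℝ n :=
  WithLp.toLp 2 ((I : Set n).indicator x)

lemma coordProj_apply (I : Finset n) (x : EuclideanSpace ℝ n) (s : n) :
    coordProj I x s = if s ∈ I then x s else 0 := by
  simp [coordProj, Set.indicator_apply]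

variable [Fintype n]

lemma inner_coordProj_left (I : Finset n) (x y : EuclideanSpace ℝ n) :
    ⟪coordProj I x, y⟫_ℝ = ⟪x, coordProj I y⟫_ℝ := by
  simp only [PiLp.inner_apply, coordProj_apply, RCLike.inner_apply, conj_trivial]
  exact Finset.sum_congr rfl fun s _ => by split_ifs <;> simp

lemma norm_sq_coordProj (I : Finset n) (x : EuclideanSpace ℝ n) :
    ‖coordProj I x‖ ^ 2 = ∑ s ∈ I, x s ^ 2 := by
  simp [EuclideanSpace.real_norm_sq_eq, coordProj_apply, ite_pow, Finset.sum_ite_mem]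

lemma norm_sq_coordProj_le (I : Finset n) (x : EuclideanSpace ℝ n) :
    ‖coordProj I x‖ ^ 2 ≤ ‖x‖ ^ 2 := by
  rw [norm_sq_coordProj, EuclideanSpace.real_norm_sq_eq]
  exact Finset.sum_le_sum_of_subset_of_nonneg (Finset.subset_univ _) fun s _ _ => sq_nonneg _

lemma sum_norm_sq_coordProj_le {κ : Type*} [Fintype κ] {I : κ → Finset n}
    (hI : Pairwise (Disjoint on I)) (x : EuclideanSpace ℝ n) :
    ∑ u, ‖coordProj (I u) x‖ ^ 2 ≤ ‖x‖ ^ 2 := by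
  classical
  simp only [norm_sq_coordProj]
  rw [EuclideanSpace.real_norm_sq_eq, ← Finset.sum_biUnion fun u _ v _ huv => hI huv]
  exact Finset.sum_le_sum_of_subset_of_nonneg (Finset.subset_univ _)
    fun s _ _ => sq_nonneg _

lemma dotProduct_mulVec_coordProj {A : Matrix n n ℝ} {I : Finset n}
    (hA : ∀ s t, s ∉ I ∨ t ∉ I → A s t = 0) (x : EuclideanSpace ℝ n) :
    coordProj I x ⬝ᵥ A *ᵥ coordProj I x = x ⬝ᵥ A *ᵥ x := by
  simp only [dotProduct, mulVec, Finset.mul_sum, coordProj_apply]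
  refine Finset.sum_congr rfl fun s _ => Finset.sum_congr rfl fun t _ => ?_
  by_cases hs : s ∈ I <;> by_cases ht : t ∈ I <;> simp [hs, ht, hA s t]

end coordProj

lemma Orthonormal.inner_sq_le_sum_inner_sq {E : Type*} [NormedAddCommGroup E]
    [InnerProductSpace ℝ E] {ρ : Type*} [Fintype ρ] {w : ρ → E} (hw : Orthonormal ℝ w)
    {v : E} (hv : ‖v‖ = 1) (hvw : v ∈ Submodule.span ℝ (Set.range w)) (x : E) :
    ⟪x, v⟫_ℝ ^ 2 ≤ ∑ m, ⟪x, w m⟫_ℝ ^ 2 := by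
  obtain ⟨c, rfl⟩ := (Submodule.mem_span_range_iff_exists_fun ℝ).1 hvw
  have hc : ∑ m, c m ^ 2 = 1 := by
    have := hw.inner_sum c c Finset.univ
    simp only [real_inner_self_eq_norm_sq, hv, conj_trivial] at this
    simpa [sq] using this.symm
  calc ⟪x, ∑ m, c m • w m⟫_ℝ ^ 2 = (∑ m, c m * ⟪x, w m⟫_ℝ) ^ 2 := by
        simp only [inner_sum, inner_smul_right]
    _ ≤ (∑ m, c m ^ 2) * ∑ m, ⟪x, w m⟫_ℝ ^ 2 := Finset.sum_mul_sq_le_sq_mul_sq _ _ _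
    _ = ∑ m, ⟪x, w m⟫_ℝ ^ 2 := by rw [hc, one_mul]

namespace Matrix.IsHermitian

section

variable {n : Type*} [Fintype n] [DecidableEq n] {A : Matrix n n ℝ} (hA : A.IsHermitian)

lemma inner_eigenvectorBasis_toLp_mulVec (x : EuclideanSpace ℝ n) (j : n) :
    ⟪hA.eigenvectorBasis j, WithLp.toLp 2 (A *ᵥ x)⟫_ℝ =
      hA.eigenvalues j * ⟪hA.eigenvectorBasis j, x⟫_ℝ := by
  simp only [EuclideanSpace.inner_eq_star_dotProduct, star_trivial]
  rw [dotProduct_comm, dotProduct_mulVec, ← mulVec_transpose,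
    ← conjTranspose_eq_transpose_of_trivial, hA.eq, mulVec_eigenvectorBasis, smul_dotProduct,
    smul_eq_mul, dotProduct_comm]

lemma dotProduct_mulVec_eq_sum (x : EuclideanSpace ℝ n) :
    x ⬝ᵥ A *ᵥ x = ∑ j, hA.eigenvalues j * ⟪hA.eigenvectorBasis j, x⟫_ℝ ^ 2 := by
  have h := hA.eigenvectorBasis.sum_inner_mul_inner x (WithLp.toLp 2 (A *ᵥ x))
  simp only [inner_eigenvectorBasis_toLp_mulVec, real_inner_comm (hA.eigenvectorBasis _) x] at h
  rw [EuclideanSpace.inner_eq_star_dotProduct, star_trivial, dotProduct_comm] at h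
  rw [← h]
  exact Finset.sum_congr rfl fun j _ => by ring

lemma dotProduct_mulVec_eigenvectorBasis (j : n) :
    hA.eigenvectorBasis j ⬝ᵥ A *ᵥ hA.eigenvectorBasis j = hA.eigenvalues j := by
  simpa using (hA.eigenvalues_eq j).symm

lemma dotProduct_mulVec_le_of_eigenvalues_le {j₀ : n} {t : ℝ}
    (ht : ∀ j ≠ j₀, hA.eigenvalues j ≤ t) (x : EuclideanSpace ℝ n) :
    x ⬝ᵥ A *ᵥ x ≤ (hA.eigenvalues j₀ - t) * ⟪hA.eigenvectorBasis j₀, x⟫_ℝ ^ 2 + t * ‖x‖ ^ 2 := by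
  have hrest : ∑ j ∈ Finset.univ.erase j₀,
      (hA.eigenvalues j - t) * ⟪hA.eigenvectorBasis j, x⟫_ℝ ^ 2 ≤ 0 :=
    Finset.sum_nonpos fun j hj => mul_nonpos_of_nonpos_of_nonneg
      (sub_nonpos.2 (ht j (Finset.ne_of_mem_erase hj))) (sq_nonneg _)
  have htotal : x ⬝ᵥ A *ᵥ x - t * ‖x‖ ^ 2 =
      ∑ j, (hA.eigenvalues j - t) * ⟪hA.eigenvectorBasis j, x⟫_ℝ ^ 2 := by
    simp only [sub_mul, Finset.sum_sub_distrib, ← Finset.mul_sum,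
      hA.eigenvectorBasis.sum_sq_inner_right, hA.dotProduct_mulVec_eq_sum]
  rw [← Finset.add_sum_erase _ _ (Finset.mem_univ j₀)] at htotal
  linarith

lemma dotProduct_mulVec_le_of_support {I : Finset n} (hsupp : ∀ s t, s ∉ I ∨ t ∉ I → A s t = 0)
    {j₀ : n} {t : ℝ} (ht : ∀ j ≠ j₀, hA.eigenvalues j ≤ t) (x : EuclideanSpace ℝ n) :
    x ⬝ᵥ A *ᵥ x ≤ (hA.eigenvalues j₀ - t) * ⟪coordProj I (hA.eigenvectorBasis j₀), x⟫_ℝ ^ 2 +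
      t * ‖coordProj I x‖ ^ 2 := by
  rw [← dotProduct_mulVec_coordProj hsupp, inner_coordProj_left]
  exact hA.dotProduct_mulVec_le_of_eigenvalues_le ht _

lemma sum_dotProduct_mulVec_le_of_support {I : Finset n}
    (hsupp : ∀ s t, s ∉ I ∨ t ∉ I → A s t = 0) {j₀ : n} {t : ℝ}
    (ht : ∀ j ≠ j₀, hA.eigenvalues j ≤ t) (ht₀ : t ≤ hA.eigenvalues j₀)
    {ρ : Type*} [Fintype ρ] {w : ρ → EuclideanSpace ℝ n} (hw : Orthonormal ℝ w) :
    ∑ m, w m ⬝ᵥ A *ᵥ w m ≤ hA.eigenvalues j₀ - t + t * ∑ m, ‖coordProj I (w m)‖ ^ 2 := by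
  have hbessel : ∑ m, ⟪coordProj I (hA.eigenvectorBasis j₀), w m⟫_ℝ ^ 2 ≤ 1 := by
    calc ∑ m, ⟪coordProj I (hA.eigenvectorBasis j₀), w m⟫_ℝ ^ 2
        = ∑ m, ‖⟪w m, coordProj I (hA.eigenvectorBasis j₀)⟫_ℝ‖ ^ 2 := by
          simp only [Real.norm_eq_abs, sq_abs, real_inner_comm]
      _ ≤ ‖coordProj I (hA.eigenvectorBasis j₀)‖ ^ 2 := hw.sum_inner_products_le _
      _ ≤ ‖hA.eigenvectorBasis j₀‖ ^ 2 := norm_sq_coordProj_le _ _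
      _ = 1 := by rw [hA.eigenvectorBasis.orthonormal.1 j₀, one_pow]
  calc ∑ m, w m ⬝ᵥ A *ᵥ w m
      ≤ ∑ m, ((hA.eigenvalues j₀ - t) * ⟪coordProj I (hA.eigenvectorBasis j₀), w m⟫_ℝ ^ 2 +
          t * ‖coordProj I (w m)‖ ^ 2) :=
        Finset.sum_le_sum fun m _ => hA.dotProduct_mulVec_le_of_support hsupp ht (w m)
    _ ≤ (hA.eigenvalues j₀ - t) * 1 + t * ∑ m, ‖coordProj I (w m)‖ ^ 2 := by
        rw [Finset.sum_add_distrib, ← Finset.mul_sum, ← Finset.mul_sum]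
        gcongr
    _ = _ := by rw [mul_one]

end

section

variable {d : ℕ} {A : Matrix (Fin d) (Fin d) ℝ} (hA : A.IsHermitian)

private lemma sortedEigenvalues_perm :
    ((List.ofFn hA.eigenvalues).mergeSort (fun a b => decide (b ≤ a))).Perm
      (List.ofFn hA.eigenvalues) :=
  List.mergeSort_perm _ _

private lemma sortedEigenvalues_pairwise :
    ((List.ofFn hA.eigenvalues).mergeSort (fun a b => decide (b ≤ a))).Pairwise (· ≥ ·) :=
  List.pairwise_mergeSort' (· ≥ ·) _

lemma exists_eigenvalues_eq_kthEig_zero (hd : 0 < d) :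
    ∃ j, hA.eigenvalues j = kthEig A hA 0 := by
  have hperm := sortedEigenvalues_perm hA
  unfold kthEig
  generalize (List.ofFn hA.eigenvalues).mergeSort _ = l at hperm ⊢
  rcases l with _ | ⟨a, l⟩
  · exact absurd hperm.length_eq (by simp [hd.ne])
  · exact List.mem_ofFn.1 (hperm.mem_iff.1 List.mem_cons_self)

lemma eigenvalues_le_kthEig_one {j₀ : Fin d} (h₀ : hA.eigenvalues j₀ = kthEig A hA 0)
    {j : Fin d} (hj : j ≠ j₀) : hA.eigenvalues j ≤ kthEig A hA 1 := by
  have hperm : ((List.ofFn hA.eigenvalues).mergeSort (fun a b => decide (b ≤ a))).Perm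
      (hA.eigenvalues j₀ :: ((List.finRange d).erase j₀).map hA.eigenvalues) := by
    refine (sortedEigenvalues_perm hA).trans ?_
    rw [List.ofFn_eq_map]
    exact (List.perm_cons_erase (List.mem_finRange j₀)).map _
  have hmem : hA.eigenvalues j ∈ ((List.finRange d).erase j₀).map hA.eigenvalues :=
    List.mem_map_of_mem ((List.mem_erase_of_ne hj).2 (List.mem_finRange j))
  have hsorted := sortedEigenvalues_pairwise hA
  unfold kthEig at h₀ ⊢
  generalize (List.ofFn hA.eigenvalues).mergeSort _ = l at hperm hsorted h₀ ⊢
  rcases l with _ | ⟨a, l⟩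
  · simp at hperm
  · obtain rfl : hA.eigenvalues j₀ = a := h₀
    replace hmem := hperm.cons_inv.mem_iff.2 hmem
    rcases l with _ | ⟨b, l⟩
    · simp at hmem
    · rcases List.mem_cons.1 hmem with h | h
      · exact h.le
      · exact (List.pairwise_cons.1 (List.pairwise_cons.1 hsorted).2).1 _ h

end

end Matrix.IsHermitian

lemma Matrix.PosSemidef.dotProduct_mulVec_le_sum_of_mem_span {n : Type*} [Fintype n]
    [DecidableEq n] {A : Matrix n n ℝ} (hA : A.PosSemidef) {ρ : Type*} [Fintype ρ]
    {w : ρ → EuclideanSpace ℝ n} (hw : Orthonormal ℝ w) {v : EuclideanSpace ℝ n}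
    (hv : ‖v‖ = 1) (hvw : v ∈ Submodule.span ℝ (Set.range w)) :
    v ⬝ᵥ A *ᵥ v ≤ ∑ m, w m ⬝ᵥ A *ᵥ w m := by
  simp only [hA.isHermitian.dotProduct_mulVec_eq_sum]
  rw [Finset.sum_comm]
  refine Finset.sum_le_sum fun j _ => ?_
  rw [← Finset.mul_sum]
  exact mul_le_mul_of_nonneg_left (hw.inner_sq_le_sum_inner_sq hv hvw _)
    (hA.eigenvalues_nonneg j)

section

variable {d : ℕ}

lemma Matrix.PosSemidef.kthEig_zero_nonneg {A : Matrix (Fin d) (Fin d) ℝ} (hA : A.PosSemidef)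
    (hd : 0 < d) : 0 ≤ kthEig A hA.isHermitian 0 := by
  obtain ⟨j, hj⟩ := hA.isHermitian.exists_eigenvalues_eq_kthEig_zero hd
  exact hj ▸ hA.eigenvalues_nonneg j

lemma exists_orthonormal_sum_kthEig_zero_le (hd : 0 < d) {ι : Type*} [Fintype ι]
    {M : ι → Matrix (Fin d) (Fin d) ℝ} (hM : ∀ i, (M i).PosSemidef) :
    ∃ r ≤ Fintype.card ι, ∃ w : Fin r → EuclideanSpace ℝ (Fin d), Orthonormal ℝ w ∧
      ∑ i, kthEig (M i) (hM i).isHermitian 0 ≤ ∑ m, w m ⬝ᵥ (∑ i, M i) *ᵥ w m := by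
  choose j hj using fun i => (hM i).isHermitian.exists_eigenvalues_eq_kthEig_zero hd
  set v := fun i => (hM i).isHermitian.eigenvectorBasis (j i)
  set W := Submodule.span ℝ (Set.range v)
  let b := stdOrthonormalBasis ℝ W
  let w : Fin (Module.finrank ℝ W) → EuclideanSpace ℝ (Fin d) := W.subtypeₗᵢ ∘ b
  have hw : Orthonormal ℝ w := b.orthonormal.comp_linearIsometry W.subtypeₗᵢ
  have hspan : Submodule.span ℝ (Set.range w) = W := by
    rw [show w = W.subtype ∘ b from rfl, Set.range_comp, Submodule.span_image, ← b.coe_toBasis,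
      b.toBasis.span_eq, Submodule.map_subtype_top]
  refine ⟨_, finrank_range_le_card v, w, hw, ?_⟩
  calc ∑ i, kthEig (M i) (hM i).isHermitian 0 = ∑ i, v i ⬝ᵥ M i *ᵥ v i := by
        simp only [v, Matrix.IsHermitian.dotProduct_mulVec_eigenvectorBasis, hj]
    _ ≤ ∑ i, ∑ m, w m ⬝ᵥ M i *ᵥ w m :=
        Finset.sum_le_sum fun i _ => (hM i).dotProduct_mulVec_le_sum_of_mem_span hw
          ((hM i).isHermitian.eigenvectorBasis.orthonormal.1 _)
          (hspan.symm ▸ Submodule.subset_span ⟨i, rfl⟩)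
    _ = _ := by
        simp only [Matrix.sum_mulVec, dotProduct_sum]
        exact Finset.sum_comm

lemma sum_dotProduct_sum_mulVec_le_sum_kthEig_zero (hd : 0 < d) {κ : Type*} [Fintype κ]
    {D : κ → Matrix (Fin d) (Fin d) ℝ} (hD : ∀ u, (D u).IsHermitian)
    {I : κ → Finset (Fin d)} (hI : Pairwise (Disjoint on I))
    (hsupp : ∀ u s t, s ∉ I u ∨ t ∉ I u → D u s t = 0) {t : ℝ} (ht : 0 ≤ t)
    (ht₁ : ∀ u, kthEig (D u) (hD u) 1 ≤ t) (ht₀ : ∀ u, t ≤ kthEig (D u) (hD u) 0)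
    {ρ : Type*} [Fintype ρ] {w : ρ → EuclideanSpace ℝ (Fin d)} (hw : Orthonormal ℝ w)
    (hρ : Fintype.card ρ ≤ Fintype.card κ) :
    ∑ m, w m ⬝ᵥ (∑ u, D u) *ᵥ w m ≤ ∑ u, kthEig (D u) (hD u) 0 := by
  have hblock : ∀ u, ∑ m, w m ⬝ᵥ D u *ᵥ w m ≤
      kthEig (D u) (hD u) 0 - t + t * ∑ m, ‖coordProj (I u) (w m)‖ ^ 2 := by
    intro u
    obtain ⟨j₀, hj₀⟩ := (hD u).exists_eigenvalues_eq_kthEig_zero hd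
    rw [← hj₀]
    exact (hD u).sum_dotProduct_mulVec_le_of_support (hsupp u)
      (fun j hj => ((hD u).eigenvalues_le_kthEig_one hj₀ hj).trans (ht₁ u)) (hj₀ ▸ ht₀ u) hw
  have hmass : ∑ u, ∑ m, ‖coordProj (I u) (w m)‖ ^ 2 ≤ Fintype.card ρ := by
    rw [Finset.sum_comm, Fintype.card_eq_sum_ones, Nat.cast_sum, Nat.cast_one]
    refine Finset.sum_le_sum fun m _ => ?_
    simpa [hw.1 m] using sum_norm_sq_coordProj_le hI (w m)
  have hcard : (Fintype.card ρ : ℝ) ≤ Fintype.card κ := by exact_mod_cast hρ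
  calc ∑ m, w m ⬝ᵥ (∑ u, D u) *ᵥ w m = ∑ u, ∑ m, w m ⬝ᵥ D u *ᵥ w m := by
        simp only [Matrix.sum_mulVec, dotProduct_sum]
        exact Finset.sum_comm
    _ ≤ ∑ u, (kthEig (D u) (hD u) 0 - t + t * ∑ m, ‖coordProj (I u) (w m)‖ ^ 2) :=
        Finset.sum_le_sum fun u _ => hblock u
    _ = ∑ u, kthEig (D u) (hD u) 0 - Fintype.card κ * t +
          t * ∑ u, ∑ m, ‖coordProj (I u) (w m)‖ ^ 2 := by
        simp [Finset.sum_add_distrib, Finset.sum_sub_distrib, Finset.mul_sum]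
    _ ≤ ∑ u, kthEig (D u) (hD u) 0 := by
        linarith [mul_le_mul_of_nonneg_left (hmass.trans hcard) ht]

theorem sum_kthEig_zero_le_of_balanced (hd : 0 < d) {ι κ : Type*} [Fintype ι] [Fintype κ]
    [Nonempty κ] (hcard : Fintype.card ι ≤ Fintype.card κ)
    {M : ι → Matrix (Fin d) (Fin d) ℝ} (hM : ∀ i, (M i).PosSemidef)
    {D : κ → Matrix (Fin d) (Fin d) ℝ} (hD : ∀ u, (D u).PosSemidef)
    (hsum : ∑ i, M i = ∑ u, D u) {I : κ → Finset (Fin d)} (hI : Pairwise (Disjoint on I))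
    (hsupp : ∀ u s t, s ∉ I u ∨ t ∉ I u → D u s t = 0)
    (hbal : ∀ u v, kthEig (D v) (hD v).isHermitian 1 ≤ kthEig (D u) (hD u).isHermitian 0) :
    ∑ i, kthEig (M i) (hM i).isHermitian 0 ≤ ∑ u, kthEig (D u) (hD u).isHermitian 0 := by
  set t := Finset.univ.inf' Finset.univ_nonempty fun u => kthEig (D u) (hD u).isHermitian 0
  obtain ⟨r, hr, w, hw, hle⟩ := exists_orthonormal_sum_kthEig_zero_le hd hM
  rw [hsum] at hle
  refine hle.trans <| sum_dotProduct_sum_mulVec_le_sum_kthEig_zero hd (fun u => (hD u).isHermitian)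
    hI hsupp (t := t) ?_ ?_ ?_ hw (by simpa using hr.trans hcard)
  · exact Finset.le_inf' _ _ fun u _ => (hD u).kthEig_zero_nonneg hd
  · exact fun v => Finset.le_inf' _ _ fun u _ => hbal u v
  · exact fun u => Finset.inf'_le _ (Finset.mem_univ u)

end

lemma eq_zero_of_mem_face_of_mem_face {d : ℕ} {I J : Finset (Fin d)} (hIJ : Disjoint I J)
    {y : Fin d → ℝ} (hI : y ∈ face I) (hJ : y ∈ face J) : y = 0 := by
  ext j
  by_cases hj : j ∈ I
  · exact hJ.2 j (Finset.disjoint_left.1 hIJ hj)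
  · exact hI.2 j hj

lemma measurableSet_face {d : ℕ} (I : Finset (Fin d)) : MeasurableSet (face I) := by
  have : face I = (⋂ t, {y : Fin d → ℝ | 0 ≤ y t}) ∩ ⋂ j ∉ I, {y | y j = 0} := by
    ext y
    simp [face]
  rw [this]
  exact (MeasurableSet.iInter fun t =>
      measurableSet_le measurable_const (measurable_pi_apply t)).inter
    (MeasurableSet.iInter fun j => MeasurableSet.iInter fun _ =>
      measurableSet_eq_fun (measurable_pi_apply j) measurable_const)

lemma aedisjoint_preimage_face {Ω : Type*} [MeasurableSpace Ω] {μ : Measure Ω} {d : ℕ}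
    {X : Ω → Fin d → ℝ} (hX : ∀ᵐ ω ∂μ, X ω ≠ 0) {I J : Finset (Fin d)} (hIJ : Disjoint I J) :
    AEDisjoint μ {ω | X ω ∈ face I} {ω | X ω ∈ face J} :=
  measure_mono_null (t := {ω | ¬X ω ≠ 0})
    (fun _ hω => not_not.2 (eq_zero_of_mem_face_of_mem_face hIJ hω.1 hω.2)) (ae_iff.1 hX)

section MomentMatrix

variable {Ω n : Type*} [MeasurableSpace Ω]

noncomputable def momentMatrix (μ : Measure Ω) (X : Ω → n → ℝ) : Matrix n n ℝ :=
  Matrix.of fun s t => ∫ ω, X ω s * X ω t ∂μ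

variable {μ : Measure Ω} {X : Ω → n → ℝ}

lemma momentMatrix_apply_eq_zero {s t : n} (h : ∀ᵐ ω ∂μ, X ω s = 0 ∨ X ω t = 0) :
    momentMatrix μ X s t = 0 :=
  integral_eq_zero_of_ae <| h.mono fun ω h => by rcases h with h | h <;> simp [h]

lemma sum_momentMatrix_restrict {ι : Type*} [Fintype ι] {B : ι → Set Ω}
    (hB : ∀ i, NullMeasurableSet (B i) μ) (hdisj : Pairwise (AEDisjoint μ on B))
    (hcover : ∀ᵐ ω ∂μ, ω ∈ ⋃ i, B i) (hX : ∀ s t, Integrable (fun ω => X ω s * X ω t) μ) :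
    ∑ i, momentMatrix (μ.restrict (B i)) X = momentMatrix μ X := by
  ext s t
  simp only [Matrix.sum_apply, momentMatrix, Matrix.of_apply]
  have h := integral_iUnion_ae hB hdisj (hX s t).integrableOn
  rw [Measure.restrict_eq_self_of_ae_mem hcover, tsum_fintype] at h
  exact h.symm

variable [Fintype n]

lemma integrable_mul_of_ae_sum_sq_le_one [IsFiniteMeasure μ] (hX : Measurable X)
    (hbdd : ∀ᵐ ω ∂μ, ∑ t, X ω t ^ 2 ≤ 1) (s t : n) :
    Integrable (fun ω => X ω s * X ω t) μ := by
  have hcoord : ∀ᵐ ω ∂μ, ∀ r, |X ω r| ≤ 1 := hbdd.mono fun ω h r =>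
    (sq_le_one_iff_abs_le_one _).1 <|
      (Finset.single_le_sum (fun r _ => sq_nonneg (X ω r)) (Finset.mem_univ r)).trans h
  refine (integrable_const (1 : ℝ)).mono' ?_ ?_
  · exact ((measurable_pi_apply s).comp hX).mul ((measurable_pi_apply t).comp hX)
      |>.aestronglyMeasurable
  · filter_upwards [hcoord] with ω h
    rw [Real.norm_eq_abs, abs_mul]
    exact mul_le_one₀ (h s) (abs_nonneg _) (h t)

lemma dotProduct_momentMatrix_mulVec (hX : ∀ s t, Integrable (fun ω => X ω s * X ω t) μ)
    (x : n → ℝ) : x ⬝ᵥ momentMatrix μ X *ᵥ x = ∫ ω, (x ⬝ᵥ X ω) ^ 2 ∂μ := by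
  have hterm : ∀ s t, Integrable (fun ω => x s * X ω s * (x t * X ω t)) μ := fun s t =>
    ((hX s t).const_mul (x s * x t)).congr (ae_of_all _ fun ω => by ring)
  calc x ⬝ᵥ momentMatrix μ X *ᵥ x = ∑ s, ∑ t, ∫ ω, x s * X ω s * (x t * X ω t) ∂μ := by
        simp only [dotProduct, mulVec, momentMatrix, Matrix.of_apply, Finset.mul_sum]
        refine Finset.sum_congr rfl fun s _ => Finset.sum_congr rfl fun t _ => ?_
        rw [← integral_mul_const, ← integral_const_mul]
        exact integral_congr_ae (ae_of_all _ fun ω => by ring)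
    _ = ∫ ω, (x ⬝ᵥ X ω) ^ 2 ∂μ := by
        simp only [← integral_finsetSum _ fun s _ => integrable_finsetSum _ fun t _ =>
          hterm s t, ← integral_finsetSum _ fun t _ => hterm _ t]
        simp only [sq, dotProduct, Finset.sum_mul_sum]

lemma posSemidef_momentMatrix (hX : ∀ s t, Integrable (fun ω => X ω s * X ω t) μ) :
    (momentMatrix μ X).PosSemidef := by
  refine .of_dotProduct_mulVec_nonneg ?_ fun x => ?_
  · ext s t
    simp [momentMatrix, mul_comm]
  · rw [star_trivial, dotProduct_momentMatrix_mulVec hX]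
    exact integral_nonneg fun ω => sq_nonneg _

end MomentMatrix

/- Here, for each group `I u` of the partition, `D u = E(X Xᵀ 1{X ∈ F_{I u}})` is the
`d × d` matrix whose nonzero block is `p_{I u} • Σ_{I u}`, so that
`kthEig (D u) _ 0 = p_{I u} λ₁(Σ_{I u})` and `kthEig (D u) _ 1 = p_{I u} λ₂(Σ_{I u})`. -/
theorem stmt_15_general {d k : ℕ} (hd : 2 ≤ d) (hk : 2 ≤ k)
    {Ω : Type*} [MeasureSpace Ω] [IsProbabilityMeasure (volume : Measure Ω)]
    (S : Set (Fin d → ℝ)) (hSdef : S = {y | (∀ t, 0 ≤ y t) ∧ ∑ t, y t ^ 2 = 1})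
    (X : Ω → Fin d → ℝ) (hXmeas : Measurable X)
    (I : Fin k → Finset (Fin d))
    (hIdisj : ∀ u v, u ≠ v → Disjoint (I u) (I v))
    (hsupp : ∀ᵐ ω, X ω ∈ S ∧ ∃ u, X ω ∈ face (I u))
    (D : Fin k → Matrix (Fin d) (Fin d) ℝ)
    (hDdef : ∀ u, D u =
      Matrix.of fun s t => ∫ ω in {ω | X ω ∈ face (I u)}, X ω s * X ω t)
    (hDh : ∀ u, (D u).IsHermitian)
    (hbal : ∀ u v, kthEig (D v) (hDh v) 1 ≤ kthEig (D u) (hDh u) 0) :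
    ∀ A : Fin k → Set (Fin d → ℝ), (∀ i, MeasurableSet (A i)) →
      Pairwise (Function.onFun Disjoint A) → S ⊆ ⋃ i, A i →
      ∀ hSA : ∀ i, (Matrix.of fun s t =>
          ∫ ω in {ω | X ω ∈ A i}, X ω s * X ω t : Matrix (Fin d) (Fin d) ℝ).IsHermitian,
        ∑ i, kthEig (Matrix.of fun s t => ∫ ω in {ω | X ω ∈ A i}, X ω s * X ω t)
            (hSA i) 0 ≤
          ∑ u, kthEig (D u) (hDh u) 0 := by
  intro A hA hAdisj hAcover _
  have : Nonempty (Fin k) := ⟨⟨0, by omega⟩⟩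
  have hnorm : ∀ y ∈ S, ∑ t, y t ^ 2 = 1 := hSdef ▸ fun y hy => hy.2
  have hXS : ∀ᵐ ω, X ω ∈ S := hsupp.mono fun _ h => h.1
  have hX0 : ∀ᵐ ω, X ω ≠ 0 := hXS.mono fun ω h h0 => by simpa [h0] using hnorm _ h
  have hint := integrable_mul_of_ae_sum_sq_le_one hXmeas (hXS.mono fun ω h => (hnorm _ h).le)
  have hfaces : ∀ u, MeasurableSet {ω | X ω ∈ face (I u)} :=
    fun u => hXmeas (measurableSet_face (I u))
  have hsum : ∑ i, momentMatrix (volume.restrict {ω | X ω ∈ A i}) X = ∑ u, D u := by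
    rw [Finset.sum_congr rfl fun u _ => hDdef u]
    exact (sum_momentMatrix_restrict (fun i => (hXmeas (hA i)).nullMeasurableSet)
      (fun i j hij => ((hAdisj hij).preimage X).aedisjoint)
      (hXS.mono fun ω h => by simpa using hAcover h) hint).trans
      (sum_momentMatrix_restrict (fun u => (hfaces u).nullMeasurableSet)
        (fun u v huv => aedisjoint_preimage_face hX0 (hIdisj u v huv))
        (hsupp.mono fun ω h => Set.mem_iUnion.2 h.2) hint).symm
  have hDpsd : ∀ u, (D u).PosSemidef := fun u =>
    hDdef u ▸ posSemidef_momentMatrix fun s t => (hint s t).restrict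
  have hDsupp : ∀ u s t, s ∉ I u ∨ t ∉ I u → D u s t = 0 := fun u s t hst => by
    rw [hDdef u]
    exact momentMatrix_apply_eq_zero <| (ae_restrict_mem (hfaces u)).mono fun ω hω =>
      hst.imp (hω.2 s) (hω.2 t)
  exact sum_kthEig_zero_le_of_balanced (by omega) le_rfl
    (fun i => posSemidef_momentMatrix fun s t => (hint s t).restrict) hDpsd hsum hIdisj hDsupp hbal

theorem stmt_15 {d k : ℕ} (hd : 2 ≤ d) (hk : 2 ≤ k) (hkd : k ≤ d)
    {Ω : Type*} [MeasureSpace Ω] [IsProbabilityMeasure (volume : Measure Ω)]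
    (S : Set (Fin d → ℝ)) (hSdef : S = {y | (∀ t, 0 ≤ y t) ∧ ∑ t, y t ^ 2 = 1})
    (X : Ω → Fin d → ℝ) (hXmeas : Measurable X)
    (I : Fin k → Finset (Fin d))
    (hIdisj : ∀ u v, u ≠ v → Disjoint (I u) (I v))
    (hIcover : ∀ j, ∃ u, j ∈ I u)
    (hIne : ∀ u, (I u).Nonempty)
    (hsupp : ∀ᵐ ω, X ω ∈ S ∧ ∃ u, X ω ∈ face (I u))
    (hp : ∀ u, volume {ω | X ω ∈ face (I u)} ≠ 0)
    (D : Fin k → Matrix (Fin d) (Fin d) ℝ)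
    (hDdef : ∀ u, D u =
      Matrix.of fun s t => ∫ ω in {ω | X ω ∈ face (I u)}, X ω s * X ω t)
    (hDh : ∀ u, (D u).IsHermitian)
    (hbal : ∀ u v, kthEig (D v) (hDh v) 1 ≤ kthEig (D u) (hDh u) 0) :
    ∀ A : Fin k → Set (Fin d → ℝ), (∀ i, MeasurableSet (A i)) →
      Pairwise (Function.onFun Disjoint A) → S ⊆ ⋃ i, A i →
      ∀ hSA : ∀ i, (Matrix.of fun s t =>
          ∫ ω in {ω | X ω ∈ A i}, X ω s * X ω t : Matrix (Fin d) (Fin d) ℝ).IsHermitian,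
        ∑ i, kthEig (Matrix.of fun s t => ∫ ω in {ω | X ω ∈ A i}, X ω s * X ω t)
            (hSA i) 0 ≤
          ∑ u, kthEig (D u) (hDh u) 0 :=
  stmt_15_general hd hk S hSdef X hXmeas I hIdisj hsupp D hDdef hDh hbal
end

section
/- Let X take each value e₁,...,e_d with probability 1/d. For any partition of {1,...,d} into two sets of sizes ℓ and d−ℓ, the corresponding value ∑ ‖E(X 1{X∈A_i})‖₂ in the 2-means dual objective equals (√ℓ + √(d−ℓ))/d when A₁ and A₂ collect the basis vectors in each set. Thus the 2-means clustering of X assigns the basis vectors to the partition sets of sizes ℓ and d−ℓ optimally only if √ℓ + √(d−ℓ) is maximal over ℓ ∈ {0,...,d}, i.e., only for the most balanced split. -/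
open MeasureTheory

/-!
On the event `X ∈ {e_i | i ∈ S}` the `t`-th coordinate of `X` is the indicator of `X = e_t` when
`t ∈ S` and vanishes otherwise, so `E(X 1{X ∈ A_S}) = (1/d) 1_S`, of norm `√|S| / d`. Every split
`S, Sᶜ` of the basis vectors is an admissible partition, since it covers `X` almost surely, so
optimality of `T, Tᶜ` compares `(√|S| + √(d - |S|)) / d` with its value for every size `|S| = m`.
-/

section
variable {ι : Type*} [DecidableEq ι]

lemma pi_single_one_injective : Function.Injective fun i : ι => (Pi.single i 1 : ι → ℝ) := by
  intro i j h
  simpa [Pi.single_apply, eq_comm] using congrFun h i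

def basisVectors (S : Finset ι) : Set (ι → ℝ) := {y | ∃ i ∈ S, y = Pi.single i 1}

lemma measurableSet_basisVectors [Countable ι] (S : Finset ι) :
    MeasurableSet (basisVectors S) := by
  have : basisVectors S = (fun i => (Pi.single i 1 : ι → ℝ)) '' S := by
    ext y; simp [basisVectors, eq_comm]
  rw [this]
  exact (S.finite_toSet.image _).measurableSet

lemma disjoint_basisVectors_compl [Fintype ι] (S : Finset ι) :
    Disjoint (basisVectors S) (basisVectors Sᶜ) := by
  rw [Set.disjoint_left]
  rintro y ⟨i, hi, rfl⟩ ⟨j, hj, hij⟩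
  exact Finset.mem_compl.mp hj (pi_single_one_injective hij ▸ hi)

lemma basisVectors_union_compl [Fintype ι] (S : Finset ι) :
    basisVectors S ∪ basisVectors Sᶜ = Set.range fun i => (Pi.single i 1 : ι → ℝ) := by
  ext y
  simp only [basisVectors, Set.mem_union, Set.mem_ofPred_eq, Set.mem_range, Finset.mem_compl]
  constructor
  · rintro (⟨i, -, rfl⟩ | ⟨i, -, rfl⟩) <;> exact ⟨i, rfl⟩
  · rintro ⟨i, rfl⟩
    by_cases hi : i ∈ S
    exacts [Or.inl ⟨i, hi, rfl⟩, Or.inr ⟨i, hi, rfl⟩]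

variable {Ω : Type*} [MeasurableSpace Ω] {μ : Measure Ω} {X : Ω → ι → ℝ}

lemma setIntegral_coord_mem_basisVectors [Countable ι] (hX : Measurable X) (S : Finset ι)
    (t : ι) :
    ∫ ω in {ω | X ω ∈ basisVectors S}, X ω t ∂μ =
      if t ∈ S then μ.real {ω | X ω = Pi.single t 1} else 0 := by
  have hcoord : ∀ ω ∈ {ω | X ω ∈ basisVectors S},
      X ω t = if t ∈ S then {ω | X ω = Pi.single t 1}.indicator 1 ω else 0 := by
    rintro ω ⟨i, hi, hω⟩
    by_cases hit : i = t
    · subst hit; simp [hω, hi]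
    · have hωt : ω ∉ {ω | X ω = Pi.single t 1} := fun h =>
        hit (pi_single_one_injective (hω.symm.trans h))
      simp [hω, Ne.symm hit, hωt]
  have hS : MeasurableSet {ω | X ω ∈ basisVectors S} := hX (measurableSet_basisVectors S)
  have ht : MeasurableSet {ω | X ω = Pi.single t 1} := hX (measurableSet_singleton _)
  rw [setIntegral_congr_fun hS hcoord]
  split_ifs with htS
  · rw [integral_indicator_one ht, measureReal_restrict_apply ht, Set.inter_eq_left.mpr]
    exact fun ω hω => ⟨t, htS, hω⟩
  · exact integral_zero _ _
end

lemma vnorm_ite_mem {d : ℕ} (S : Finset (Fin d)) {c : ℝ} (hc : 0 ≤ c) :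
    vnorm (fun t => if t ∈ S then c else 0) = Real.sqrt S.card * c := by
  have : ∑ t, (if t ∈ S then c else 0) ^ 2 = S.card * c ^ 2 := by
    simp [ite_pow, Finset.sum_ite_mem]
  rw [vnorm, this, Real.sqrt_mul (Nat.cast_nonneg _), Real.sqrt_sq hc]

section
variable {d : ℕ} {Ω : Type*} [MeasurableSpace Ω] {μ : Measure Ω} {X : Ω → Fin d → ℝ}

lemma vnorm_setIntegral_basisVectors (hX : Measurable X)
    (hunif : ∀ i : Fin d, μ {ω | X ω = Pi.single i 1} = (d : ENNReal)⁻¹) (S : Finset (Fin d)) :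
    vnorm (fun t => ∫ ω in {ω | X ω ∈ basisVectors S}, X ω t ∂μ) = Real.sqrt S.card / d := by
  have hmass : ∀ t, μ.real {ω | X ω = Pi.single t 1} = (d : ℝ)⁻¹ := fun t => by
    simp [measureReal_def, hunif t]
  simp only [setIntegral_coord_mem_basisVectors hX, hmass]
  rw [vnorm_ite_mem S (by positivity), div_eq_mul_inv]

lemma dualObjective_basisVectors_compl (hX : Measurable X)
    (hunif : ∀ i : Fin d, μ {ω | X ω = Pi.single i 1} = (d : ENNReal)⁻¹) (S : Finset (Fin d)) :
    vnorm (fun t => ∫ ω in {ω | X ω ∈ basisVectors S}, X ω t ∂μ) +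
        vnorm (fun t => ∫ ω in {ω | X ω ∈ basisVectors Sᶜ}, X ω t ∂μ) =
      (Real.sqrt S.card + Real.sqrt (d - S.card)) / d := by
  rw [vnorm_setIntegral_basisVectors hX hunif, vnorm_setIntegral_basisVectors hX hunif,
    Finset.card_compl, Fintype.card_fin,
    Nat.cast_sub (S.card_le_univ.trans_eq (Fintype.card_fin d)), add_div]
end

theorem stmt_17_general {d : ℕ}
    {Ω : Type*} [MeasureSpace Ω]
    (X : Ω → Fin d → ℝ) (hXmeas : Measurable X)
    (hXbasis : ∀ᵐ ω, ∃ i : Fin d, X ω = Pi.single i 1)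
    (hXunif : ∀ i : Fin d, volume {ω | X ω = Pi.single i 1} = (d : ENNReal)⁻¹)
    (T : Finset (Fin d)) (ℓ : ℕ) (hℓ : ℓ = T.card)
    (A₁ A₂ : Set (Fin d → ℝ))
    (hA₁ : A₁ = {y | ∃ i ∈ T, y = Pi.single i 1})
    (hA₂ : A₂ = {y | ∃ i ∈ Tᶜ, y = Pi.single i 1}) :
    -- the value of the 2-means dual objective at this partition of the basis vectors
    vnorm (fun t => ∫ ω in {ω | X ω ∈ A₁}, X ω t) +
        vnorm (fun t => ∫ ω in {ω | X ω ∈ A₂}, X ω t) =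
      (Real.sqrt ℓ + Real.sqrt (d - ℓ)) / d ∧
    -- optimality of this partition forces the balanced split
    ((∀ B₁ B₂ : Set (Fin d → ℝ), MeasurableSet B₁ → MeasurableSet B₂ →
        Disjoint B₁ B₂ → (∀ᵐ ω, X ω ∈ B₁ ∪ B₂) →
        vnorm (fun t => ∫ ω in {ω | X ω ∈ B₁}, X ω t) +
            vnorm (fun t => ∫ ω in {ω | X ω ∈ B₂}, X ω t) ≤
          vnorm (fun t => ∫ ω in {ω | X ω ∈ A₁}, X ω t) +
            vnorm (fun t => ∫ ω in {ω | X ω ∈ A₂}, X ω t)) →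
      ∀ m : ℕ, m ≤ d →
        Real.sqrt m + Real.sqrt (d - m) ≤ Real.sqrt ℓ + Real.sqrt (d - ℓ)) := by
  obtain rfl : A₁ = basisVectors T := hA₁
  obtain rfl : A₂ = basisVectors Tᶜ := hA₂
  subst hℓ
  have hvalue := dualObjective_basisVectors_compl hXmeas hXunif
  refine ⟨hvalue T, fun hopt m hm => ?_⟩
  obtain ⟨S, -, rfl⟩ :=
    Finset.exists_subset_card_eq (show m ≤ (Finset.univ : Finset (Fin d)).card by simpa using hm)
  have hcover : ∀ᵐ ω, X ω ∈ basisVectors S ∪ basisVectors Sᶜ := by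
    filter_upwards [hXbasis] with ω ⟨i, hi⟩
    rw [basisVectors_union_compl]
    exact ⟨i, hi.symm⟩
  have h := hopt _ _ (measurableSet_basisVectors S) (measurableSet_basisVectors Sᶜ)
    (disjoint_basisVectors_compl S) hcover
  rw [hvalue, hvalue] at h
  rcases d.eq_zero_or_pos with rfl | hd
  -- dividing by `d = 0` lost the information in `h`, but then `S = T = ∅`
  · simp [Finset.eq_empty_of_isEmpty]
  · exact (div_le_div_iff_of_pos_right (by positivity)).mp h

theorem stmt_17 {d : ℕ} (hd : 2 ≤ d)
    {Ω : Type*} [MeasureSpace Ω] [IsProbabilityMeasure (volume : Measure Ω)]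
    (X : Ω → Fin d → ℝ) (hXmeas : Measurable X)
    (hXbasis : ∀ᵐ ω, ∃ i : Fin d, X ω = Pi.single i 1)
    (hXunif : ∀ i : Fin d, volume {ω | X ω = Pi.single i 1} = (d : ENNReal)⁻¹)
    (T : Finset (Fin d)) (ℓ : ℕ) (hℓ : ℓ = T.card)
    (A₁ A₂ : Set (Fin d → ℝ))
    (hA₁ : A₁ = {y | ∃ i ∈ T, y = Pi.single i 1})
    (hA₂ : A₂ = {y | ∃ i ∈ Tᶜ, y = Pi.single i 1}) :
    -- the value of the 2-means dual objective at this partition of the basis vectors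
    vnorm (fun t => ∫ ω in {ω | X ω ∈ A₁}, X ω t) +
        vnorm (fun t => ∫ ω in {ω | X ω ∈ A₂}, X ω t) =
      (Real.sqrt ℓ + Real.sqrt (d - ℓ)) / d ∧
    -- optimality of this partition forces the balanced split
    ((∀ B₁ B₂ : Set (Fin d → ℝ), MeasurableSet B₁ → MeasurableSet B₂ →
        Disjoint B₁ B₂ → (∀ᵐ ω, X ω ∈ B₁ ∪ B₂) →
        vnorm (fun t => ∫ ω in {ω | X ω ∈ B₁}, X ω t) +
            vnorm (fun t => ∫ ω in {ω | X ω ∈ B₂}, X ω t) ≤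
          vnorm (fun t => ∫ ω in {ω | X ω ∈ A₁}, X ω t) +
            vnorm (fun t => ∫ ω in {ω | X ω ∈ A₂}, X ω t)) →
      ∀ m : ℕ, m ≤ d →
        Real.sqrt m + Real.sqrt (d - m) ≤ Real.sqrt ℓ + Real.sqrt (d - ℓ)) :=
  stmt_17_general X hXmeas hXbasis hXunif T ℓ hℓ A₁ A₂ hA₁ hA₂
end
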